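/- arXiv:2003.13019 — 10 statements merged into one kernel-verified Lean document; each statement's English description precedes it below -/
import Mathlib

section
/- Let p be a prime, d = p^k + 1, and c ∈ GF(p^gcd(k,n)) with c ≠ 1. Then for every b ∈ GF(p^n), the equation (x+1)^d - c·x^d = b has at most gcd(d, p^n - 1) solutions in GF(p^n), and the power function x^d on GF(p^n) is differentially (c, e)-uniform with e = gcd(d, p^n - 1). -/
def cDelta {F : Type*} [Field F] [Fintype F] [DecidableEq F]
    (f : F → F) (c a b : F) : ℕ :=
  (Finset.univ.filter (fun x : F => f (x + a) - c * f x = b)).card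

def cUnif {F : Type*} [Field F] [Fintype F] [DecidableEq F]
    (f : F → F) (c : F) : ℕ :=
  Finset.univ.sup fun a : F => Finset.univ.sup fun b : F => cDelta f c a b

/-!
Since `c` and hence `t = (1 - c)⁻¹` are fixed by `x ↦ x ^ p ^ k`, the substitution `y = x + t`
turns `(x + 1) ^ d - c * x ^ d = b` into `(1 - c) * y ^ d + c / (c - 1) = b`, an equation
`y ^ d = u`, which has at most `gcd d (p ^ n - 1)` solutions in `GF(p ^ n)`, with equality for
`u = 1`. Homogeneity of `x ^ d` reduces every shift `a ≠ 0` to `a = 1`, and for `a = 0` the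
equation is already of the form `y ^ d = u`.
-/

open Finset

section PowCount

variable {F : Type*} [Field F] [Fintype F] [DecidableEq F] {d : ℕ}

theorem card_filter_pow_eq_one (hd : 0 < d) :
    #{x : F | x ^ d = 1} = d.gcd (Fintype.card F - 1) := by
  have : NeZero d := ⟨hd.ne'⟩
  calc #{x : F | x ^ d = 1}
      = Nat.card {x : F // x ^ d = 1} := by
        rw [Nat.card_eq_fintype_card, Fintype.card_subtype]
    _ = Nat.card (rootsOfUnity d F) :=
        Nat.card_congr ((rootsOfUnityEquivNthRoots F d).trans
          (Equiv.subtypeEquivRight fun x => Polynomial.mem_nthRoots hd)).symm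
    _ = d.gcd (Fintype.card F - 1) := by
        rw [rootsOfUnity_eq_ker, IsCyclic.card_powMonoidHom_ker, Nat.card_units,
          Nat.card_eq_fintype_card, Nat.gcd_comm]

theorem card_filter_pow_eq_le (hd : 0 < d) (u : F) :
    #{x : F | x ^ d = u} ≤ d.gcd (Fintype.card F - 1) := by
  rw [← card_filter_pow_eq_one hd]
  rcases eq_or_ne u 0 with rfl | hu
  · calc #{x : F | x ^ d = 0}
        ≤ 1 := card_le_one.2 fun a ha b hb => by simp_all [pow_eq_zero_iff hd.ne']
      _ ≤ #{x : F | x ^ d = 1} := card_pos.2 ⟨1, by simp⟩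
  obtain hempty | ⟨y, hy⟩ := (filter (fun x : F => x ^ d = u) univ).eq_empty_or_nonempty
  · simp [hempty]
  · rw [mem_filter_univ] at hy
    have hy0 : y ≠ 0 := by rintro rfl; exact hu (hy ▸ zero_pow hd.ne')
    refine card_le_card_of_injOn (· * y⁻¹) (fun x hx => ?_) fun a _ b _ hab => ?_
    · simp only [coe_filter, mem_univ, true_and, Set.mem_ofPred_eq] at hx ⊢
      rw [mul_pow, hx, inv_pow, hy, mul_inv_cancel₀ hu]
    · exact mul_right_cancel₀ (inv_ne_zero hy0) hab

end PowCount

section CDelta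

variable {F : Type*} [Field F] [Fintype F] [DecidableEq F]

theorem cDelta_le_cUnif (f : F → F) (c a b : F) : cDelta f c a b ≤ cUnif f c :=
  (le_sup (f := fun b => cDelta f c a b) (mem_univ b)).trans
    (le_sup (f := fun a => univ.sup fun b => cDelta f c a b) (mem_univ a))

theorem cUnif_le {f : F → F} {c : F} {e : ℕ} (h : ∀ a b, cDelta f c a b ≤ e) : cUnif f c ≤ e :=
  Finset.sup_le fun a _ => Finset.sup_le fun b _ => h a b

theorem cDelta_pow_zero {c : F} (hc : c ≠ 1) (d : ℕ) (b : F) :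
    cDelta (· ^ d) c 0 b = #{x : F | x ^ d = b / (1 - c)} := by
  have hc' : 1 - c ≠ 0 := sub_ne_zero.2 hc.symm
  refine congrArg card (filter_congr fun x _ => ?_)
  simp only [add_zero, eq_div_iff hc']
  constructor <;> intro h <;> linear_combination h

theorem cDelta_pow_of_ne_zero {a : F} (ha : a ≠ 0) (c : F) (d : ℕ) (b : F) :
    cDelta (· ^ d) c a b = cDelta (· ^ d) c 1 (b / a ^ d) := by
  have had : a ^ d ≠ 0 := pow_ne_zero d ha
  refine card_equiv (Equiv.divRight₀ a ha) fun x => ?_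
  have hshift : x / a + 1 = (x + a) / a := by field_simp
  simp only [mem_filter_univ, Equiv.divRight₀_apply, hshift, div_pow, eq_div_iff had]
  field_simp

theorem cUnif_pow_eq_of_cDelta_one_le {c : F} (hc : c ≠ 1) {d : ℕ} (hd : 0 < d)
    (h : ∀ b, cDelta (· ^ d) c 1 b ≤ d.gcd (Fintype.card F - 1)) :
    cUnif (· ^ d) c = d.gcd (Fintype.card F - 1) := by
  refine le_antisymm (cUnif_le fun a b => ?_) ?_
  · rcases eq_or_ne a 0 with rfl | ha
    · exact (cDelta_pow_zero hc d b).trans_le (card_filter_pow_eq_le hd _)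
    · exact (cDelta_pow_of_ne_zero ha c d b).trans_le (h _)
  · calc d.gcd (Fintype.card F - 1)
        = cDelta (· ^ d) c 0 (1 - c) := by
          rw [cDelta_pow_zero hc, div_self (sub_ne_zero.2 hc.symm), card_filter_pow_eq_one hd]
      _ ≤ cUnif (· ^ d) c := cDelta_le_cUnif _ c 0 _

end CDelta

theorem pow_pow_eq_self_of_dvd {M : Type*} [Monoid M] {c : M} {p m k : ℕ}
    (h : c ^ p ^ m = c) (hmk : m ∣ k) : c ^ p ^ k = c := by
  obtain ⟨j, rfl⟩ := hmk
  induction j with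
  | zero => simp
  | succ j ih => rw [Nat.mul_succ, pow_add, pow_mul, ih, h]

section Gold

variable {F : Type*} [Field F] {p k : ℕ} [ExpChar F p]

theorem add_one_pow_sub_mul_pow {c : F} (hc : c ≠ 1) (hck : c ^ p ^ k = c) (x : F) :
    (x + 1) ^ (p ^ k + 1) - c * x ^ (p ^ k + 1)
      = (1 - c) * (x + (1 - c)⁻¹) ^ (p ^ k + 1) + c / (c - 1) := by
  have hc' : 1 - c ≠ 0 := sub_ne_zero.2 hc.symm
  have htk : (1 - c)⁻¹ ^ p ^ k = (1 - c)⁻¹ := by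
    rw [inv_pow, sub_pow_expChar_pow, one_pow, hck]
  rw [pow_succ, pow_succ, pow_succ, add_pow_expChar_pow, add_pow_expChar_pow, one_pow, htk]
  field_simp
  ring

variable [Fintype F] [DecidableEq F]

theorem cDelta_gold_one_le {c : F} (hc : c ≠ 1) (hck : c ^ p ^ k = c) (b : F) :
    cDelta (· ^ (p ^ k + 1)) c 1 b ≤ (p ^ k + 1).gcd (Fintype.card F - 1) := by
  have hc' : 1 - c ≠ 0 := sub_ne_zero.2 hc.symm
  calc cDelta (· ^ (p ^ k + 1)) c 1 b
      = #{y : F | y ^ (p ^ k + 1) = (b - c / (c - 1)) / (1 - c)} := by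
        refine card_equiv (Equiv.addRight (1 - c)⁻¹) fun x => ?_
        simp only [mem_filter_univ, Equiv.coe_addRight, add_one_pow_sub_mul_pow hc hck,
          eq_div_iff hc']
        constructor <;> intro h <;> linear_combination h
    _ ≤ _ := card_filter_pow_eq_le (Nat.succ_pos _) _

end Gold

theorem stmt3_general {F : Type*} [Field F] [Fintype F] [DecidableEq F]
    (p n k : ℕ) (hp : p.Prime)
    (hcard : Fintype.card F = p ^ n)
    (c : F) (hc : c ≠ 1)
    -- c lies in the subfield GF(p^gcd(k,n)):
    (hcsub : c ^ p ^ Nat.gcd k n = c) :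
    (∀ b : F,
      (Finset.univ.filter
        (fun x : F => (x + 1) ^ (p ^ k + 1) - c * x ^ (p ^ k + 1) = b)).card ≤
        Nat.gcd (p ^ k + 1) (p ^ n - 1)) ∧
    cUnif (fun x : F => x ^ (p ^ k + 1)) c = Nat.gcd (p ^ k + 1) (p ^ n - 1) := by
  have : Fact p.Prime := ⟨hp⟩
  have : CharP F p := charP_of_card_eq_prime_pow hcard
  have hck : c ^ p ^ k = c := pow_pow_eq_self_of_dvd hcsub (Nat.gcd_dvd_left k n)
  rw [← hcard]
  exact ⟨cDelta_gold_one_le hc hck,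
    cUnif_pow_eq_of_cDelta_one_le hc (Nat.succ_pos _) (cDelta_gold_one_le hc hck)⟩

theorem stmt3 {F : Type*} [Field F] [Fintype F] [DecidableEq F]
    (p n k : ℕ) (hp : p.Prime) (hn : 0 < n) (hk : 0 < k)
    (hcard : Fintype.card F = p ^ n)
    (c : F) (hc : c ≠ 1)
    -- c lies in the subfield GF(p^gcd(k,n)):
    (hcsub : c ^ p ^ Nat.gcd k n = c) :
    (∀ b : F,
      (Finset.univ.filter
        (fun x : F => (x + 1) ^ (p ^ k + 1) - c * x ^ (p ^ k + 1) = b)).card ≤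
        Nat.gcd (p ^ k + 1) (p ^ n - 1)) ∧
    cUnif (fun x : F => x ^ (p ^ k + 1)) c = Nat.gcd (p ^ k + 1) (p ^ n - 1) :=
  stmt3_general p n k hp hcard c hc hcsub
end

section
/- Let n, k be positive integers with k odd and gcd(k,n) = 1, and let d = (3^k + 1)/2. Then the power function x^d on GF(3^n) is AP_cN for c = -1: for every a ≠ 0 and every b in GF(3^n), the equation (x+a)^d + x^d = b has at most 2 solutions, and the maximum over all a, b of the number of solutions of (x+a)^d + x^d = b (including a = 0) equals 2. -/
/-!
An even function `f` whose derivatives `x ↦ f (x + s) - f x` (`s ≠ 0`) are all injective has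
`c`-differential uniformity `2` for `c = -1`: if `u ≠ w` both solve `f (x + a) + f x = b`, evenness
turns this into an equality of two values of the derivative in direction `u - w`, at `w + a` and
at `-u`, so `u + w = -a` and there is no room for a third solution.

That `x ^ d`, `d = (3 ^ k + 1) / 2`, has injective derivatives is the Coulter–Matthews theorem.
After an affine change of variables it amounts to injectivity of `y ↦ (y + 1) ^ d - (y - 1) ^ d`.
Writing `y = v + v⁻¹` with `v` in `GF(3 ^ (2 n))` and using the Frobenius, this map becomes
`v + v⁻¹ ↦ v ^ m + v⁻ᵐ` with `m = (3 ^ k - 1) / 2`, and `m` is prime to `3 ^ (2 n) - 1`.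
-/

open Finset Function

def IsPlanar {G R : Type*} [AddGroup G] [AddGroup R] (f : G → R) : Prop :=
  ∀ s ≠ 0, Injective fun x => f (x + s) - f x

section EvenPlanar

variable {G R : Type*} [AddCommGroup G] [AddCommGroup R] {f : G → R}

theorem IsPlanar.add_eq_neg_of_add_apply_add_eq (hf : IsPlanar f) (heven : f.Even) {a u w : G}
    (huw : u ≠ w) (h : f (u + a) + f u = f (w + a) + f w) : u + w = -a := by
  have hw : w + a = -u := hf (u - w) (sub_ne_zero.mpr huw) <| by
    dsimp only
    rw [show w + a + (u - w) = u + a by abel, show -u + (u - w) = -w by abel, heven, heven,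
      sub_eq_sub_iff_add_eq_add, h, add_comm]
  rw [eq_neg_iff_add_eq_zero, add_assoc, hw, add_neg_cancel]

theorem IsPlanar.card_filter_add_apply_add_eq_le_two [Fintype G] [DecidableEq R]
    (hf : IsPlanar f) (heven : f.Even) (a : G) (b : R) :
    #{x | f (x + a) + f x = b} ≤ 2 := by
  by_contra! hcard
  obtain ⟨x₁, x₂, x₃, h₁, h₂, h₃, h₁₂, h₁₃, h₂₃⟩ := two_lt_card_iff.mp hcard
  simp only [mem_filter, mem_univ, true_and] at h₁ h₂ h₃
  have e₁₂ := hf.add_eq_neg_of_add_apply_add_eq heven h₁₂ (h₁.trans h₂.symm)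
  have e₁₃ := hf.add_eq_neg_of_add_apply_add_eq heven h₁₃ (h₁.trans h₃.symm)
  exact h₂₃ (add_left_cancel (e₁₂.trans e₁₃.symm))

end EvenPlanar

theorem cDelta_neg_one {F : Type*} [Field F] [Fintype F] [DecidableEq F] (f : F → F) (a b : F) :
    cDelta f (-1) a b = #{x | f (x + a) + f x = b} := by
  simp only [cDelta, neg_one_mul, sub_neg_eq_add]

theorem cUnif_neg_one_eq_two {F : Type*} [Field F] [Fintype F] [DecidableEq F] {f : F → F}
    (h2 : (2 : F) ≠ 0) (hf : IsPlanar f) (heven : f.Even) : cUnif f (-1) = 2 := by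
  refine le_antisymm (Finset.sup_le fun a _ => Finset.sup_le fun b _ => ?_) ?_
  · rw [cDelta_neg_one]
    exact hf.card_filter_add_apply_add_eq_le_two heven a b
  have hne : (1 : F) ≠ -1 := fun h => h2 (by linear_combination h)
  calc 2 = #{1, -1} := (card_pair hne).symm
    _ ≤ cDelta f (-1) 0 (f 1 + f 1) := by
      rw [cDelta_neg_one]
      refine card_le_card fun x hx => ?_
      rcases mem_insert.mp hx with rfl | hx
      · simp
      · simp [mem_singleton.mp hx, heven 1]
    _ ≤ cUnif f (-1) := le_sup_of_le (mem_univ 0) (le_sup (f := cDelta f (-1) 0) (mem_univ _))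

theorem isPlanar_pow_of_injective {K : Type*} [Field K] (h2 : (2 : K) ≠ 0) {d : ℕ}
    (hg : Injective fun y : K => (y + 1) ^ d - (y - 1) ^ d) : IsPlanar fun x : K => x ^ d := by
  intro s hs x₁ x₂ hx
  have hsubst : ∀ x, (x + s) ^ d - x ^ d =
      (s / 2) ^ d * (((2 * x + s) / s + 1) ^ d - ((2 * x + s) / s - 1) ^ d) := by
    intro x
    rw [mul_sub, ← mul_pow, ← mul_pow]
    congr 2 <;> field_simp <;> ring
  simp only [hsubst] at hx
  have hy := hg (mul_left_cancel₀ (pow_ne_zero d (div_ne_zero hs h2)) hx)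
  simp only [div_left_inj' hs, add_left_inj] at hy
  exact mul_left_cancel₀ h2 hy

theorem three_pow_mod_four {k : ℕ} (hk : Odd k) : 3 ^ k % 4 = 3 := by
  obtain ⟨j, rfl⟩ := hk
  rw [pow_succ, pow_mul, Nat.mul_mod, Nat.pow_mod]
  norm_num

theorem even_three_pow_add_one_div_two {k : ℕ} (hk : Odd k) : Even ((3 ^ k + 1) / 2) := by
  have := three_pow_mod_four hk
  rw [Nat.even_iff]
  omega

theorem coprime_three_pow_sub_one_div_two {k n : ℕ} (hk : Odd k) (hkn : k.Coprime n) :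
    ((3 ^ k - 1) / 2).Coprime ((3 ^ n) ^ 2 - 1) := by
  have h4 := three_pow_mod_four hk
  have hgcd : Nat.gcd (3 ^ k - 1) ((3 ^ n) ^ 2 - 1) = 2 := by
    rw [← pow_mul, Nat.pow_sub_one_gcd_pow_sub_one,
      (Nat.Coprime.mul_right hkn (Nat.coprime_two_right.mpr hk)).gcd_eq_one]
    rfl
  have hdvd : Nat.gcd ((3 ^ k - 1) / 2) ((3 ^ n) ^ 2 - 1) ∣ 2 :=
    (Nat.gcd_dvd_gcd_of_dvd_left _ (Nat.div_dvd_of_dvd (show 2 ∣ 3 ^ k - 1 by omega))).trans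
      (dvd_of_eq hgcd)
  rcases (Nat.dvd_prime Nat.prime_two).mp hdvd with h | h
  · exact h
  · have := Nat.gcd_dvd_left ((3 ^ k - 1) / 2) ((3 ^ n) ^ 2 - 1)
    rw [h] at this
    generalize 3 ^ k = q at h4 this
    omega

theorem eq_or_eq_inv_of_add_inv_eq_add_inv {K : Type*} [Field K] {u w : K} (hu : u ≠ 0)
    (hw : w ≠ 0) (h : u + u⁻¹ = w + w⁻¹) : u = w ∨ u = w⁻¹ := by
  have : (u - w) * (u * w - 1) = 0 := by
    field_simp at h
    linear_combination h
  rcases mul_eq_zero.mp this with h | h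
  · exact .inl (sub_eq_zero.mp h)
  · exact .inr (eq_inv_of_mul_eq_one_left (sub_eq_zero.mp h))

theorem eq_of_pow_eq_pow_of_coprime {G₀ : Type*} [CommGroupWithZero G₀] {m N : ℕ}
    (hmN : m.Coprime N) {u w : G₀} (hw : w ≠ 0) (huN : u ^ N = 1) (hwN : w ^ N = 1)
    (h : u ^ m = w ^ m) : u = w := by
  rw [← div_eq_one_iff_eq hw, ← pow_eq_one_iff_of_coprime hmN, div_pow, div_pow, h, huN, hwN,
    div_self (pow_ne_zero m hw), div_one]
  exact ⟨rfl, rfl⟩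

theorem exists_add_inv_eq {K : Type*} [Field K] [IsAlgClosed K] (y : K) :
    ∃ v ≠ 0, v + v⁻¹ = y := by
  open Polynomial in
  obtain ⟨v, hv⟩ := IsAlgClosed.exists_root (X ^ 2 - C y * X + 1 : K[X]) <| by
    rw [show (X ^ 2 - C y * X + 1 : K[X]).degree = 2 by compute_degree!]
    decide
  simp only [IsRoot, eval_add, eval_sub, eval_pow, eval_mul, eval_X, eval_C, eval_one] at hv
  have hv0 : v ≠ 0 := by rintro rfl; simp at hv
  refine ⟨v, hv0, ?_⟩
  field_simp
  linear_combination hv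

theorem pow_pow_two_eq_self_of_add_inv_pow_eq {K : Type*} [Field K] (p : ℕ) [ExpChar K p]
    (n : ℕ) {v : K} (hv : v ≠ 0) (h : (v + v⁻¹) ^ p ^ n = v + v⁻¹) : v ^ (p ^ n) ^ 2 = v := by
  rw [← iterateFrobenius_def, map_add, map_inv₀, iterateFrobenius_def] at h
  rw [sq, pow_mul]
  rcases eq_or_eq_inv_of_add_inv_eq_add_inv (pow_ne_zero _ hv) hv h with h | h <;>
    simp [h]

theorem add_one_pow_sub_sub_one_pow_add_inv {K : Type*} [Field K] [CharP K 3] (k : ℕ) {v : K}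
    (hv : v ≠ 0) :
    (v + v⁻¹ + 1) ^ ((3 ^ k + 1) / 2) - (v + v⁻¹ - 1) ^ ((3 ^ k + 1) / 2) =
      v ^ ((3 ^ k - 1) / 2) + (v ^ ((3 ^ k - 1) / 2))⁻¹ := by
  have h3 : (3 : K) = 0 := CharP.cast_eq_zero K 3
  obtain ⟨m, hm⟩ : Odd (3 ^ k) := Odd.pow ⟨1, rfl⟩
  have hd : (3 ^ k + 1) / 2 = m + 1 := by omega
  have hm' : (3 ^ k - 1) / 2 = m := by omega
  rw [hd, hm']
  have e₁ : v * (v + v⁻¹ + 1) = (v - 1) ^ 2 := by field_simp; linear_combination v * h3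
  have e₂ : v * (v + v⁻¹ - 1) = (v + 1) ^ 2 := by field_simp; linear_combination -v * h3
  have f₁ : (v - 1) ^ 3 ^ k = v ^ 3 ^ k - 1 := by
    simpa using sub_pow_char_pow (p := 3) (n := k) v 1
  have f₂ : (v + 1) ^ 3 ^ k = v ^ 3 ^ k + 1 := by
    simpa using add_pow_char_pow (p := 3) (n := k) v 1
  apply mul_left_cancel₀ (pow_ne_zero (m + 1) hv)
  rw [mul_sub, ← mul_pow, ← mul_pow, e₁, e₂, ← pow_mul, ← pow_mul,
    show 2 * (m + 1) = 3 ^ k + 1 by omega, pow_succ, pow_succ, f₁, f₂, hm]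
  have hrhs : v ^ (m + 1) * (v ^ m + (v ^ m)⁻¹) = v ^ (2 * m + 1) + v := by
    field_simp
    ring
  rw [hrhs]
  linear_combination (-(v ^ (2 * m + 1)) - v) * h3

theorem injective_add_one_pow_sub_sub_one_pow {F : Type*} [Field F] [Fintype F] [CharP F 3]
    {n k : ℕ} (hcard : Fintype.card F = 3 ^ n) (hk : Odd k) (hkn : k.Coprime n) :
    Injective fun y : F => (y + 1) ^ ((3 ^ k + 1) / 2) - (y - 1) ^ ((3 ^ k + 1) / 2) := by
  let ι := algebraMap F (AlgebraicClosure F)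
  have hroot : ∀ y : F, ∃ v ≠ 0, v + v⁻¹ = ι y ∧ v ^ ((3 ^ n) ^ 2 - 1) = 1 := by
    intro y
    obtain ⟨v, hv, hy⟩ := exists_add_inv_eq (ι y)
    have hfix := pow_pow_two_eq_self_of_add_inv_pow_eq 3 n hv <| by
      rw [hy, ← map_pow, ← hcard, FiniteField.pow_card]
    refine ⟨v, hv, hy, mul_left_cancel₀ hv ?_⟩
    rw [← pow_succ', Nat.sub_add_cancel (Nat.one_le_pow _ _ (by norm_num)), hfix, mul_one]
  have hcop := coprime_three_pow_sub_one_div_two hk hkn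
  intro y₁ y₂ h
  obtain ⟨v₁, hv₁, hy₁, hN₁⟩ := hroot y₁
  obtain ⟨v₂, hv₂, hy₂, hN₂⟩ := hroot y₂
  replace h := congrArg ι h
  simp only [map_sub, map_pow, map_add, map_one, ← hy₁, ← hy₂,
    add_one_pow_sub_sub_one_pow_add_inv k hv₁, add_one_pow_sub_sub_one_pow_add_inv k hv₂] at h
  apply ι.injective
  rw [← hy₁, ← hy₂]
  rcases eq_or_eq_inv_of_add_inv_eq_add_inv (pow_ne_zero _ hv₁) (pow_ne_zero _ hv₂) h with h | h
  · rw [eq_of_pow_eq_pow_of_coprime hcop hv₂ hN₁ hN₂ h]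
  · rw [eq_of_pow_eq_pow_of_coprime hcop (inv_ne_zero hv₂) hN₁ (by rw [inv_pow, hN₂, inv_one])
      (by rw [inv_pow, h]), inv_inv, add_comm]

theorem stmt7_general {F : Type*} [Field F] [Fintype F] [DecidableEq F]
    (n k : ℕ) (hk : Odd k) (hkn : Nat.gcd k n = 1)
    (hcard : Fintype.card F = 3 ^ n) :
    (∀ a : F, a ≠ 0 → ∀ b : F,
      (Finset.univ.filter
        (fun x : F => (x + a) ^ ((3 ^ k + 1) / 2) + x ^ ((3 ^ k + 1) / 2) = b)).card ≤ 2) ∧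
    cUnif (fun x : F => x ^ ((3 ^ k + 1) / 2)) (-1 : F) = 2 := by
  have : CharP F 3 := charP_of_card_eq_prime_pow hcard
  have h2 : (2 : F) ≠ 0 := Ring.two_ne_zero (by rw [ringChar.eq F 3]; decide)
  have hplanar : IsPlanar fun x : F => x ^ ((3 ^ k + 1) / 2) :=
    isPlanar_pow_of_injective h2 (injective_add_one_pow_sub_sub_one_pow hcard hk hkn)
  have heven : (fun x : F => x ^ ((3 ^ k + 1) / 2)).Even :=
    (even_three_pow_add_one_div_two hk).neg_pow
  exact ⟨fun a _ b => hplanar.card_filter_add_apply_add_eq_le_two heven a b,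
    cUnif_neg_one_eq_two h2 hplanar heven⟩

theorem stmt7 {F : Type*} [Field F] [Fintype F] [DecidableEq F]
    (n k : ℕ) (hn : 0 < n) (hk : Odd k) (hkn : Nat.gcd k n = 1)
    (hcard : Fintype.card F = 3 ^ n) :
    (∀ a : F, a ≠ 0 → ∀ b : F,
      (Finset.univ.filter
        (fun x : F => (x + a) ^ ((3 ^ k + 1) / 2) + x ^ ((3 ^ k + 1) / 2) = b)).card ≤ 2) ∧
    cUnif (fun x : F => x ^ ((3 ^ k + 1) / 2)) (-1 : F) = 2 :=
  stmt7_general n k hk hkn hcard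
end

section
/- Let p be a prime and n ≥ 1 with p^n ≡ 2 (mod 3), and let d = (2·p^n - 1)/3. Then gcd(d, p^n - 1) = 1, and for every c ≠ 1 in GF(p^n) and every b ∈ GF(p^n), the equation (x+1)^d - c·x^d = b has at most 3 solutions x ∈ GF(p^n). Hence the c-differential uniformity of x^d is at most 3. -/
open Polynomial Finset

theorem Nat.coprime_of_mul_eq_mul_add_one {a b d m : ℕ} (h : a * d = b * m + 1) :
    d.Coprime m :=
  Nat.coprime_of_mul_modEq_one a <| by
    rw [mul_comm, h, Nat.ModEq, Nat.mul_add_mod_self_right]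

theorem card_filter_add_mul_pow_three_sub_pow_three_le {K : Type*} [Field K] [Fintype K]
    [DecidableEq K] {c : K} (hc : c ^ 3 ≠ 1) (b : K) :
    #{β | (b + c * β) ^ 3 - β ^ 3 = 1} ≤ 3 := by
  set P : K[X] := (C b + C c * X) ^ 3 - X ^ 3 - 1
  have hP : P = C (c ^ 3 - 1) * X ^ 3 + C (3 * c ^ 2 * b) * X ^ 2 + C (3 * c * b ^ 2) * X
      + C (b ^ 3 - 1) := by
    simp only [P, map_sub, map_mul, map_pow, map_ofNat, map_one]; ring
  have hdeg : P.natDegree = 3 := by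
    rw [hP]; compute_degree!; exact sub_ne_zero.mpr hc
  have hP0 : P ≠ 0 := ne_zero_of_natDegree_gt (n := 0) (by omega)
  refine (card_le_degree_of_subset_roots fun β hβ => ?_).trans hdeg.le
  simp only [mem_val, mem_filter, mem_univ, true_and] at hβ
  simp [mem_roots hP0, P, hβ]

namespace FiniteField

variable {F : Type*} [Field F] [Fintype F] {d : ℕ}

theorem pow_mul_card_sub_one_add_one (m : ℕ) (x : F) :
    x ^ (m * (Fintype.card F - 1) + 1) = x := by
  rcases eq_or_ne x 0 with rfl | hx
  · exact zero_pow (Nat.succ_ne_zero _)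
  · rw [pow_succ, pow_mul', pow_card_sub_one_eq_one x hx, one_pow, one_mul]

theorem pow_pow_three_of_three_mul_eq (hd : 3 * d = 2 * (Fintype.card F - 1) + 1) (x : F) :
    (x ^ d) ^ 3 = x := by
  rw [← pow_mul, mul_comm, hd, pow_mul_card_sub_one_add_one]

theorem pow_three_pow_of_three_mul_eq (hd : 3 * d = 2 * (Fintype.card F - 1) + 1) (x : F) :
    (x ^ 3) ^ d = x := by
  rw [← pow_mul, hd, pow_mul_card_sub_one_add_one]

theorem pow_injective_of_three_mul_eq (hd : 3 * d = 2 * (Fintype.card F - 1) + 1) :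
    Function.Injective fun x : F => x ^ d :=
  Function.LeftInverse.injective (pow_pow_three_of_three_mul_eq hd)

theorem pow_three_injective_of_three_mul_eq (hd : 3 * d = 2 * (Fintype.card F - 1) + 1) :
    Function.Injective fun x : F => x ^ 3 :=
  Function.LeftInverse.injective (pow_three_pow_of_three_mul_eq hd)

theorem card_filter_add_one_pow_sub_mul_pow_le_three [DecidableEq F]
    (hd : 3 * d = 2 * (Fintype.card F - 1) + 1) {c : F} (hc : c ≠ 1) (b : F) :
    #{x | (x + 1) ^ d - c * x ^ d = b} ≤ 3 := by
  have hc3 : c ^ 3 ≠ 1 := fun h =>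
    hc (pow_three_injective_of_three_mul_eq hd (by simpa only [one_pow] using h))
  refine (card_le_card_of_injOn (· ^ d) (fun x hx => ?_)
    (pow_injective_of_three_mul_eq hd).injOn).trans
    (card_filter_add_mul_pow_three_sub_pow_three_le hc3 b)
  simp only [coe_filter, mem_univ, true_and, Set.mem_ofPred_eq] at hx ⊢
  rw [← hx, sub_add_cancel, pow_pow_three_of_three_mul_eq hd,
    pow_pow_three_of_three_mul_eq hd, add_sub_cancel_left]

end FiniteField

section Differential

variable {F : Type*} [Field F] [Fintype F] [DecidableEq F]

theorem cUnif_le_of_forall_cDelta_le {f : F → F} {c : F} {k : ℕ}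
    (h : ∀ a b, cDelta f c a b ≤ k) : cUnif f c ≤ k :=
  Finset.sup_le fun a _ => Finset.sup_le fun b _ => h a b

theorem cDelta_zero_le_one {f : F → F} (hf : Function.Injective f) {c : F}
    (hc : c ≠ 1) (b : F) : cDelta f c 0 b ≤ 1 := by
  refine card_le_one.mpr fun x hx y hy => hf ?_
  simp only [mem_filter, mem_univ, true_and, add_zero] at hx hy
  have h1c : (1 : F) - c ≠ 0 := sub_ne_zero.mpr hc.symm
  exact mul_left_cancel₀ h1c (by linear_combination hx - hy)

theorem cDelta_pow_eq_cDelta_pow_one (d : ℕ) {a : F} (ha : a ≠ 0) (c b : F) :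
    cDelta (· ^ d) c a b = cDelta (· ^ d) c 1 (b / a ^ d) := by
  refine card_equiv (Equiv.divRight₀ a ha) fun x => ?_
  simp only [mem_filter, mem_univ, true_and, Equiv.divRight₀_apply]
  rw [div_add_one ha, div_pow, div_pow, mul_div_assoc', ← sub_div,
    div_left_inj' (pow_ne_zero d ha)]

end Differential

theorem stmt9_general {F : Type*} [Field F] [Fintype F] [DecidableEq F]
    (p n : ℕ) (hmod : p ^ n % 3 = 2)
    (hcard : Fintype.card F = p ^ n) :
    Nat.gcd ((2 * p ^ n - 1) / 3) (p ^ n - 1) = 1 ∧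
    ∀ c : F, c ≠ 1 →
      (∀ b : F,
        (Finset.univ.filter
          (fun x : F => (x + 1) ^ ((2 * p ^ n - 1) / 3) -
            c * x ^ ((2 * p ^ n - 1) / 3) = b)).card ≤ 3) ∧
      cUnif (fun x : F => x ^ ((2 * p ^ n - 1) / 3)) c ≤ 3 := by
  have hd : 3 * ((2 * p ^ n - 1) / 3) = 2 * (p ^ n - 1) + 1 := by omega
  have hdF : 3 * ((2 * p ^ n - 1) / 3) = 2 * (Fintype.card F - 1) + 1 := hcard ▸ hd
  refine ⟨Nat.coprime_of_mul_eq_mul_add_one hd, fun c hc =>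
    ⟨FiniteField.card_filter_add_one_pow_sub_mul_pow_le_three hdF hc, ?_⟩⟩
  refine cUnif_le_of_forall_cDelta_le fun a b => ?_
  rcases eq_or_ne a 0 with rfl | ha
  · exact (cDelta_zero_le_one (FiniteField.pow_injective_of_three_mul_eq hdF) hc b).trans
      (by norm_num)
  · rw [cDelta_pow_eq_cDelta_pow_one _ ha]
    exact FiniteField.card_filter_add_one_pow_sub_mul_pow_le_three hdF hc _

theorem stmt9 {F : Type*} [Field F] [Fintype F] [DecidableEq F]
    (p n : ℕ) (hp : p.Prime) (hn : 1 ≤ n) (hmod : p ^ n % 3 = 2)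
    (hcard : Fintype.card F = p ^ n) :
    Nat.gcd ((2 * p ^ n - 1) / 3) (p ^ n - 1) = 1 ∧
    ∀ c : F, c ≠ 1 →
      (∀ b : F,
        (Finset.univ.filter
          (fun x : F => (x + 1) ^ ((2 * p ^ n - 1) / 3) -
            c * x ^ ((2 * p ^ n - 1) / 3) = b)).card ≤ 3) ∧
      cUnif (fun x : F => x ^ ((2 * p ^ n - 1) / 3)) c ≤ 3 :=
  stmt9_general p n hmod hcard
end

section
/- Let p be an odd prime, d = (p^n + 1)/2, and c ∈ GF(p^n) with c ≠ ±1. Then the c-differential uniformity of the power function x^d on GF(p^n) is at most 4. -/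
theorem stmt10 {F : Type*} [Field F] [Fintype F] [DecidableEq F]
    (p n : ℕ) (hp : p.Prime) (hodd : Odd p) (hn : 0 < n)
    (hcard : Fintype.card F = p ^ n)
    (c : F) (hc1 : c ≠ 1) (hc2 : c ≠ -1) :
    cUnif (fun x : F => x ^ ((p ^ n + 1) / 2)) c ≤ 4 := by
  set d := (p ^ n + 1) / 2 with hd
  have hqodd : Odd (p ^ n) := hodd.pow
  obtain ⟨k, hk⟩ := hqodd
  have hd2 : d * 2 = p ^ n + 1 := by omega
  have key : ∀ x : F, x ^ d = x ∨ x ^ d = -x := by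
    intro x
    have hsq : (x ^ d) ^ 2 = x ^ 2 := by
      rw [← pow_mul, hd2, pow_succ, ← hcard, FiniteField.pow_card, sq]
    have hz : (x ^ d - x) * (x ^ d + x) = 0 := by linear_combination hsq
    rcases mul_eq_zero.1 hz with h | h
    · exact Or.inl (sub_eq_zero.1 h)
    · exact Or.inr (eq_neg_of_add_eq_zero_left h)
  have h1c : (1 : F) - c ≠ 0 := sub_ne_zero.2 fun h => hc1 h.symm
  have h1c' : (1 : F) + c ≠ 0 := fun h => hc2 (eq_neg_of_add_eq_zero_right h)
  refine Finset.sup_le fun a _ => Finset.sup_le fun b _ => ?_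
  unfold cDelta
  set x1 := (b - a) / (1 - c) with hx1
  set x2 := (b - a) / (1 + c) with hx2
  set x3 := -(b + a) / (1 + c) with hx3
  set x4 := (b + a) / (c - 1) with hx4
  have hsub : (Finset.univ.filter fun x : F =>
      (x + a) ^ d - c * x ^ d = b) ⊆ {x1, x2, x3, x4} := by
    intro x hx
    simp only [Finset.mem_filter, Finset.mem_univ, true_and] at hx
    simp only [Finset.mem_insert, Finset.mem_singleton]
    rcases key (x + a) with h1 | h1 <;> rcases key x with h2 | h2 <;>
      rw [h1, h2] at hx
    · refine Or.inl ?_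
      rw [hx1, eq_div_iff h1c]; linear_combination hx
    · refine Or.inr (Or.inl ?_)
      rw [hx2, eq_div_iff h1c']; linear_combination hx
    · refine Or.inr (Or.inr (Or.inl ?_))
      rw [hx3, eq_div_iff h1c']; linear_combination -hx
    · refine Or.inr (Or.inr (Or.inr ?_))
      have hc1' : c - 1 ≠ 0 := sub_ne_zero.2 hc1
      rw [hx4, eq_div_iff hc1']; linear_combination hx
  refine (Finset.card_le_card hsub).trans ?_
  have a1 := Finset.card_insert_le x1 ({x2, x3, x4} : Finset F)
  have a2 := Finset.card_insert_le x2 ({x3, x4} : Finset F)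
  have a3 := Finset.card_insert_le x3 ({x4} : Finset F)
  have a4 : ({x4} : Finset F).card = 1 := Finset.card_singleton x4
  show (insert x1 (insert x2 (insert x3 ({x4} : Finset F)))).card ≤ 4
  omega
end

section
/- Let p be an odd prime with p^n ≡ 1 (mod 4), d = (p^n + 1)/2, and c ∈ GF(p^n) with c ≠ ±1 such that (1-c)/(1+c) is a nonzero square in GF(p^n). Then the c-differential uniformity of x^d on GF(p^n) is at most 2. -/
theorem key_count {F : Type*} [Field F] [Fintype F] [DecidableEq F]
    (s : ℕ) (c a b : F)
    (hs1 : ∀ x : F, x ≠ 0 → x ^ s = 1 ∨ x ^ s = -1)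
    (hne : (1 : F) ≠ -1)
    (hsE : Even s)
    (hc1 : c ≠ 1) (hc2 : c ≠ -1)
    (hsq : (1 - c) ^ s = (1 + c) ^ s) :
    (Finset.univ.filter (fun x : F => (x + a) ^ (s+1) - c * x ^ (s+1) = b)).card ≤ 2 := by
  have h1c : (1 : F) - c ≠ 0 := fun h => hc1 (by linear_combination -h)
  have h1c' : (1 : F) + c ≠ 0 := fun h => hc2 (by linear_combination h)
  have hneg1 : (-1 : F) ^ s = 1 := hsE.neg_one_pow
  have hnegpow : ∀ x : F, (-x) ^ s = x ^ s := fun x => by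
    rw [neg_eq_neg_one_mul, mul_pow, hneg1, one_mul]
  have helper : ∀ t : F, t ≠ 0 → t ^ s = -t ^ s → False := by
    intro t ht h
    rcases hs1 t ht with h1 | h1 <;> rw [h1] at h
    · exact hne (by linear_combination h)
    · exact hne (by linear_combination -h)
  have hsne : ∀ x : F, x ≠ 0 → x ^ s ≠ 0 := by
    intro x hx
    rcases hs1 x hx with h1 | h1 <;> rw [h1]
    · exact one_ne_zero
    · exact neg_ne_zero.mpr one_ne_zero
  have chiRel : ∀ x u y v : F, x * u = y * v → x ^ s * u ^ s = y ^ s * v ^ s := by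
    intro x u y v h; rw [← mul_pow, ← mul_pow, h]
  have finj : ∀ x y : F, x ^ (s+1) = y ^ (s+1) → x = y := by
    intro x y h
    rcases eq_or_ne x 0 with rfl | hx
    · rw [zero_pow (Nat.succ_ne_zero s)] at h
      exact (pow_eq_zero_iff (Nat.succ_ne_zero s)).mp h.symm |>.symm
    rcases eq_or_ne y 0 with rfl | hy
    · rw [zero_pow (Nat.succ_ne_zero s)] at h
      exact absurd ((pow_eq_zero_iff (Nat.succ_ne_zero s)).mp h) hx
    rw [pow_succ, pow_succ] at h
    rcases hs1 x hx with h1 | h1 <;> rcases hs1 y hy with h2 | h2 <;> rw [h1, h2] at h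
    · linear_combination h
    · exfalso
      have hxy : x = -y := by linear_combination h
      rw [hxy, hnegpow] at h1
      exact hne (h1.symm.trans h2)
    · exfalso
      have hxy : x = -y := by linear_combination -h
      rw [hxy, hnegpow] at h1
      exact hne (h2.symm.trans h1)
    · linear_combination -h
  rcases eq_or_ne a 0 with rfl | ha
  · refine le_trans (Finset.card_le_one.mpr ?_) one_le_two
    intro x hx y hy
    simp only [Finset.mem_filter, Finset.mem_univ, true_and, add_zero] at hx hy
    apply finj
    exact mul_left_cancel₀ h1c (show (1-c) * x ^ (s+1) = (1-c) * y^(s+1) by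
      linear_combination hx - hy)
  rcases eq_or_ne c 0 with rfl | hc0
  · refine le_trans (Finset.card_le_one.mpr ?_) one_le_two
    intro x hx y hy
    simp only [Finset.mem_filter, Finset.mem_univ, true_and, zero_mul, sub_zero] at hx hy
    have := finj (x+a) (y+a) (hx.trans hy.symm)
    exact add_right_cancel this
  -- main case
  have solve : ∀ x : F, x ≠ 0 → x + a ≠ 0 → ((x+a)^(s+1) - c * x^(s+1) = b) →
      x * (1 - c * ((x+a)^s * x^s)) = (x+a)^s * b - a := by
    intro x hx hxa heq
    rw [pow_succ, pow_succ] at heq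
    rcases hs1 _ hxa with hε | hε <;> rcases hs1 x hx with hδ | hδ <;>
      rw [hε, hδ] <;> rw [hε, hδ] at heq <;>
      first
        | linear_combination heq
        | linear_combination -heq
  have sameEps : ∀ x y : F, x ≠ 0 → x + a ≠ 0 → y ≠ 0 → y + a ≠ 0 →
      ((x+a)^(s+1) - c * x^(s+1) = b) → ((y+a)^(s+1) - c * y^(s+1) = b) →
      (x+a)^s = (y+a)^s → x = y := by
    intro x y hx hxa hy hya hex hey hE
    have Hx := solve x hx hxa hex
    have Hy := solve y hy hya hey
    rw [hE] at Hx
    rcases hs1 _ hya with hε | hε <;>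
      rcases hs1 x hx with hδx | hδx <;> rcases hs1 y hy with hδy | hδy <;>
      rw [hε, hδx] at Hx <;> rw [hε, hδy] at Hy <;>
      first
        | exact mul_right_cancel₀ h1c (show x * (1-c) = y * (1-c) by
            linear_combination Hx - Hy)
        | exact mul_right_cancel₀ h1c' (show x * (1+c) = y * (1+c) by
            linear_combination Hx - Hy)
        | (have h' : x * (1-c) = y * (1+c) := by linear_combination Hx - Hy
           have h2 := chiRel x (1-c) y (1+c) h'
           rw [hδx, hδy, hsq] at h2
           exact (helper (1+c) h1c' (by first | linear_combination h2 | linear_combination -h2)).elim)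
        | (have h' : x * (1+c) = y * (1-c) := by linear_combination Hx - Hy
           have h2 := chiRel x (1+c) y (1-c) h'
           rw [hδx, hδy, hsq] at h2
           exact (helper (1+c) h1c' (by first | linear_combination h2 | linear_combination -h2)).elim)
  have negA : ((-a+a)^(s+1) - c * (-a)^(s+1) = b) → ∀ w : F,
      ((w+a)^(s+1) - c * w^(s+1) = b) → w = -a := by
    intro hna w hew
    have hb : b = c * (a ^ s * a) := by
      rw [neg_add_cancel, zero_pow (Nat.succ_ne_zero s), pow_succ, hnegpow] at hna
      linear_combination -hna
    by_contra hwa'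
    have hwa : w + a ≠ 0 := fun h => hwa' (by linear_combination h)
    rcases eq_or_ne w 0 with rfl | hw
    · rw [zero_add, zero_pow (Nat.succ_ne_zero s), pow_succ] at hew
      have h0 : a ^ s * a * (1 - c) = 0 := by linear_combination hew + hb
      exact absurd h0 (mul_ne_zero (mul_ne_zero (hsne a ha) ha) h1c)
    have Hw := solve w hw hwa hew
    rcases hs1 _ hwa with hε | hε <;> rcases hs1 a ha with hA | hA <;>
      rcases hs1 w hw with hδ | hδ <;> rw [hε, hδ] at Hw <;> rw [hA] at hb <;>
      first
        | exact hwa ((mul_eq_zero.mp (show (w+a)*(1-c) = 0 by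
            first | linear_combination Hw + hb | linear_combination Hw - hb)).resolve_right h1c)
        | exact hwa ((mul_eq_zero.mp (show (w+a)*(1+c) = 0 by
            first | linear_combination Hw + hb | linear_combination Hw - hb)).resolve_right h1c')
        | (have h' : w * (1-c) = (-a) * (1+c) := by
             first | linear_combination Hw + hb | linear_combination Hw - hb
           have h2 := chiRel w (1-c) (-a) (1+c) h'
           rw [hδ, hnegpow, hA, hsq] at h2
           exact helper (1+c) h1c' (by first | linear_combination h2 | linear_combination -h2))
        | (have h' : w * (1+c) = (-a) * (1-c) := by
             first | linear_combination Hw + hb | linear_combination Hw - hb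
           have h2 := chiRel w (1+c) (-a) (1-c) h'
           rw [hδ, hnegpow, hA, hsq] at h2
           exact helper (1+c) h1c' (by first | linear_combination h2 | linear_combination -h2))
  have zeroLem : ((0+a)^(s+1) - c * 0^(s+1) = b) → ∀ w : F, w ≠ 0 → w + a ≠ 0 →
      ((w+a)^(s+1) - c * w^(s+1) = b) → (w+a)^s = -a^s := by
    intro h0 w hw hwa hew
    have hb : b = a ^ s * a := by
      rw [zero_add, zero_pow (Nat.succ_ne_zero s), pow_succ] at h0
      linear_combination -h0
    have Hw := solve w hw hwa hew
    rcases hs1 _ hwa with hε | hε <;> rcases hs1 a ha with hA | hA <;>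
      rcases hs1 w hw with hδ | hδ <;> rw [hε, hδ] at Hw <;> rw [hA] at hb <;> rw [hε, hA] <;>
      first
        | exact absurd ((mul_eq_zero.mp (show w * (1-c) = 0 by
            first | linear_combination Hw + hb | linear_combination Hw - hb)).resolve_right h1c) hw
        | exact absurd ((mul_eq_zero.mp (show w * (1+c) = 0 by
            first | linear_combination Hw + hb | linear_combination Hw - hb)).resolve_right h1c') hw
        | norm_num
  by_contra hcard
  obtain ⟨x, y, z, hx, hy, hz, hxy, hxz, hyz⟩ :=
    Finset.two_lt_card_iff.mp (not_le.mp hcard)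
  simp only [Finset.mem_filter, Finset.mem_univ, true_and] at hx hy hz
  have hnaS : ¬ ((-a+a)^(s+1) - c * (-a)^(s+1) = b) := by
    intro h
    exact hxy ((negA h x hx).trans (negA h y hy).symm)
  have hne_na : ∀ w : F, ((w+a)^(s+1) - c*w^(s+1) = b) → w + a ≠ 0 := by
    intro w hew h
    rw [show w = -a by linear_combination h] at hew
    exact hnaS hew
  rcases eq_or_ne x 0 with rfl | hx0
  · have e1 := zeroLem hx y (Ne.symm hxy) (hne_na y hy) hy
    have e2 := zeroLem hx z (Ne.symm hxz) (hne_na z hz) hz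
    exact hyz (sameEps y z (Ne.symm hxy) (hne_na y hy) (Ne.symm hxz) (hne_na z hz) hy hz
      (e1.trans e2.symm))
  rcases eq_or_ne y 0 with rfl | hy0
  · have e1 := zeroLem hy x hx0 (hne_na x hx) hx
    have e2 := zeroLem hy z (Ne.symm hyz) (hne_na z hz) hz
    exact hxz (sameEps x z hx0 (hne_na x hx) (Ne.symm hyz) (hne_na z hz) hx hz
      (e1.trans e2.symm))
  rcases eq_or_ne z 0 with rfl | hz0
  · have e1 := zeroLem hz x hx0 (hne_na x hx) hx
    have e2 := zeroLem hz y hy0 (hne_na y hy) hy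
    exact hxy (sameEps x y hx0 (hne_na x hx) hy0 (hne_na y hy) hx hy
      (e1.trans e2.symm))
  rcases hs1 _ (hne_na x hx) with e1 | e1 <;> rcases hs1 _ (hne_na y hy) with e2 | e2 <;>
    rcases hs1 _ (hne_na z hz) with e3 | e3 <;>
    first
      | exact hxy (sameEps x y hx0 (hne_na x hx) hy0 (hne_na y hy) hx hy (e1.trans e2.symm))
      | exact hxz (sameEps x z hx0 (hne_na x hx) hz0 (hne_na z hz) hx hz (e1.trans e3.symm))
      | exact hyz (sameEps y z hy0 (hne_na y hy) hz0 (hne_na z hz) hy hz (e2.trans e3.symm))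

theorem stmt11 {F : Type*} [Field F] [Fintype F] [DecidableEq F]
    (p n : ℕ) (hp : p.Prime) (hodd : Odd p) (hn : 0 < n)
    (hmod : p ^ n % 4 = 1) (hcard : Fintype.card F = p ^ n)
    (c : F) (hc1 : c ≠ 1) (hc2 : c ≠ -1)
    (hchi : IsSquare ((1 - c) / (1 + c))) :
    cUnif (fun x : F => x ^ ((p ^ n + 1) / 2)) c ≤ 2 := by
  have hq2 : Fintype.card F % 2 = 1 := by rw [hcard]; exact Nat.odd_iff.mp hodd.pow
  have hq4 : Fintype.card F % 4 = 1 := by rw [hcard]; exact hmod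
  have hqpos : 0 < Fintype.card F := Fintype.card_pos
  have hchar : ringChar F ≠ 2 := by
    intro h
    have := FiniteField.even_card_iff_char_two.mp h
    omega
  have hne : (1 : F) ≠ -1 := (Ring.neg_one_ne_one_of_char_ne_two hchar).symm
  have hs1 : ∀ x : F, x ≠ 0 → x ^ (Fintype.card F / 2) = 1 ∨ x ^ (Fintype.card F / 2) = -1 := by
    intro x hx
    have h1 : x ^ (Fintype.card F - 1) = 1 := FiniteField.pow_card_sub_one_eq_one x hx
    have h2 : (x ^ (Fintype.card F / 2)) ^ 2 = 1 := by
      rw [← pow_mul, show Fintype.card F / 2 * 2 = Fintype.card F - 1 by omega]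
      exact h1
    exact sq_eq_one_iff.mp h2
  have hsE : Even (Fintype.card F / 2) := Nat.even_iff.mpr (by omega)
  have h1c : (1:F) - c ≠ 0 := fun h => hc1 (by linear_combination -h)
  have h1c' : (1:F) + c ≠ 0 := fun h => hc2 (by linear_combination h)
  have hsq : (1 - c) ^ (Fintype.card F / 2) = (1 + c) ^ (Fintype.card F / 2) := by
    have ht : (1-c)/(1+c) ≠ 0 := div_ne_zero h1c h1c'
    have h := (FiniteField.isSquare_iff hchar ht).mp hchi
    rw [div_pow] at h
    exact (div_eq_one_iff_eq (pow_ne_zero _ h1c')).mp h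
  have hexp : (p ^ n + 1) / 2 = Fintype.card F / 2 + 1 := by omega
  refine Finset.sup_le fun a _ => Finset.sup_le fun b _ => ?_
  show (Finset.univ.filter
      (fun x : F => (x + a) ^ ((p^n+1)/2) - c * x ^ ((p^n+1)/2) = b)).card ≤ 2
  rw [hexp]
  exact key_count (Fintype.card F / 2) c a b hs1 hne hsE hc1 hc2 hsq
end

section
/- Let p > 3 be an odd prime with p^n ≡ 3 (mod 4), and d = (p^n + 3)/2. Then for c = -1, the c-differential uniformity of x^d on GF(p^n) is at most 3; i.e., for all a, b ∈ GF(p^n), the equation (x+a)^d + x^d = b has at most 3 solutions. -/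
open Finset

lemma aux12 {F : Type*} [Field F] [Fintype F] [DecidableEq F]
    (hq : Fintype.card F % 4 = 3) (a b : F) :
    (Finset.univ.filter (fun x : F =>
      (x + a) ^ (Fintype.card F / 2 + 2) + x ^ (Fintype.card F / 2 + 2) = b)).card ≤ 3 := by
  set q := Fintype.card F with hqdef
  set m := q / 2 with hmdef
  have hchar : ringChar F ≠ 2 := by
    intro h
    have := FiniteField.even_card_of_char_two h
    omega
  have h1 : (-1 : F) ≠ 1 := Ring.neg_one_ne_one_of_char_ne_two hchar
  have h2 : (2 : F) ≠ 0 := Ring.two_ne_zero hchar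
  have hmodd : Odd m := ⟨q / 4, by omega⟩
  have hm0 : m ≠ 0 := by omega
  have hmm : ∀ x : F, x ≠ 0 → x ^ m * x ^ m = 1 := by
    intro x hx
    rw [← pow_add, (by omega : m + m = q - 1)]
    exact FiniteField.pow_card_sub_one_eq_one x hx
  have hpm : ∀ x : F, x ≠ 0 → x ^ m = 1 ∨ x ^ m = -1 :=
    fun x hx => mul_self_eq_one_iff.mp (hmm x hx)
  have hzero : (0 : F) ^ m = 0 := zero_pow hm0
  have hnegpow : ∀ x : F, (-x) ^ m = -x ^ m := fun x => hmodd.neg_pow x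
  have hsplit : ∀ x : F, x ^ (m + 2) = x ^ m * x ^ 2 := fun x => pow_add x m 2
  by_cases ha : a = 0
  · -- at most one solution
    subst ha
    refine le_trans (Finset.card_le_one.mpr ?_) (by norm_num)
    intro x hx y hy
    simp only [Finset.mem_filter, Finset.mem_univ, true_and, add_zero] at hx hy
    have hxy : x ^ (m + 2) = y ^ (m + 2) := by
      have h' : 2 * x ^ (m + 2) = 2 * y ^ (m + 2) := by linear_combination hx - hy
      exact mul_left_cancel₀ h2 h'
    by_cases hx0 : x = 0
    · subst hx0
      rw [zero_pow (by omega : m + 2 ≠ 0)] at hxy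
      exact (pow_eq_zero_iff (by omega : m + 2 ≠ 0)).mp hxy.symm |>.symm
    by_cases hy0 : y = 0
    · subst hy0
      rw [zero_pow (by omega : m + 2 ≠ 0)] at hxy
      exact (pow_eq_zero_iff (by omega : m + 2 ≠ 0)).mp hxy
    rw [hsplit x, hsplit y] at hxy
    have hsq : ∀ z : F, z ≠ 0 → (z ^ 2) ^ m = 1 := by
      intro z hz
      rw [← pow_mul, two_mul, pow_add]
      exact hmm z hz
    rcases hpm x hx0 with h | h <;> rcases hpm y hy0 with h' | h' <;>
        rw [h, h'] at hxy
    · -- x^2 = y^2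
      have hxy2 : (x - y) * (x + y) = 0 := by linear_combination hxy
      rcases mul_eq_zero.mp hxy2 with h0 | h0
      · exact sub_eq_zero.mp h0
      · exfalso
        have hyx : y = -x := by linear_combination h0
        rw [hyx, hnegpow, h] at h'
        exact h1 h'
    · exfalso
      have hx2 : x ^ 2 = -y ^ 2 := by linear_combination hxy
      have e1 := hsq x hx0
      rw [hx2, hnegpow, hsq y hy0] at e1
      exact h1 e1
    · exfalso
      have hx2 : y ^ 2 = -x ^ 2 := by linear_combination -hxy
      have e1 := hsq y hy0
      rw [hx2, hnegpow, hsq x hx0] at e1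
      exact h1 e1
    · have hxy2 : (x - y) * (x + y) = 0 := by linear_combination -hxy
      rcases mul_eq_zero.mp hxy2 with h0 | h0
      · exact sub_eq_zero.mp h0
      · exfalso
        have hyx : y = -x := by linear_combination h0
        rw [hyx, hnegpow, h] at h'
        rw [neg_neg] at h'
        exact h1 h'.symm
  -- main case : a ≠ 0
  set S := Finset.univ.filter (fun x : F =>
      (x + a) ^ (m + 2) + x ^ (m + 2) = b) with hSdef
  have hamm : a ^ m * a ^ m = 1 := hmm a ha
  have h4 : (4 : F) ≠ 0 := by
    rw [show (4 : F) = 2 * 2 by norm_num]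
    exact mul_ne_zero h2 h2
  -- the squared-b contradiction helper
  have habs : ∀ z : F, z ≠ 0 → z + a ≠ 0 → b ^ 2 = a ^ 4 →
      (b = 2 * a * z + a ^ 2 ∨ b = -(2 * a * z + a ^ 2)) → False := by
    intro z hz hza hb4 hd
    have hb2 : b ^ 2 = (2 * a * z + a ^ 2) ^ 2 := by
      rcases hd with h | h <;> rw [h] <;> ring
    have key : (4 * a ^ 2) * (z * (z + a)) = 0 := by linear_combination hb4 - hb2
    rcases mul_eq_zero.mp key with h0 | h0
    · exact (mul_ne_zero h4 (pow_ne_zero 2 ha)) h0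
    · rcases mul_eq_zero.mp h0 with h0 | h0
      · exact hz h0
      · exact hza h0
  -- classification of the "third" class
  have hclass : ∀ z ∈ S.filter (fun z => ¬((z + a) ^ m = 1 ∧ z ^ m = 1) ∧
        ¬((z + a) ^ m = -1 ∧ z ^ m = -1)),
      (z = 0 ∧ b = a ^ m * a ^ 2) ∨ (z = -a ∧ b = -(a ^ m * a ^ 2)) ∨
      (z ≠ 0 ∧ z + a ≠ 0 ∧ (z + a) ^ m = 1 ∧ z ^ m = -1 ∧ b = 2 * a * z + a ^ 2) ∨
      (z ≠ 0 ∧ z + a ≠ 0 ∧ (z + a) ^ m = -1 ∧ z ^ m = 1 ∧ b = -(2 * a * z + a ^ 2)) := by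
    intro z hz
    simp only [Finset.mem_filter, hSdef, Finset.mem_univ, true_and] at hz
    obtain ⟨hze, hne1, hne4⟩ := hz
    by_cases hz0 : z = 0
    · subst hz0
      rw [zero_add, zero_pow (by omega : m + 2 ≠ 0), add_zero, hsplit] at hze
      exact Or.inl ⟨rfl, hze.symm⟩
    by_cases hza : z + a = 0
    · have hz' : z = -a := by linear_combination hza
      rw [hza, zero_pow (by omega : m + 2 ≠ 0), zero_add, hz',
        (hmodd.add_even even_two).neg_pow, hsplit] at hze
      exact Or.inr (Or.inl ⟨hz', by linear_combination -hze⟩)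
    rcases hpm (z + a) hza with hs1 | hs1 <;> rcases hpm z hz0 with hs2 | hs2
    · exact absurd ⟨hs1, hs2⟩ hne1
    · rw [hsplit (z + a), hsplit z, hs1, hs2] at hze
      exact Or.inr (Or.inr (Or.inl ⟨hz0, hza, hs1, hs2, by linear_combination -hze⟩))
    · rw [hsplit (z + a), hsplit z, hs1, hs2] at hze
      exact Or.inr (Or.inr (Or.inr ⟨hz0, hza, hs1, hs2, by linear_combination -hze⟩))
    · exact absurd ⟨hs1, hs2⟩ hne4
  have hsub : S ⊆ S.filter (fun x => (x + a) ^ m = 1 ∧ x ^ m = 1) ∪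
      S.filter (fun x => (x + a) ^ m = -1 ∧ x ^ m = -1) ∪
      S.filter (fun x => ¬((x + a) ^ m = 1 ∧ x ^ m = 1) ∧
        ¬((x + a) ^ m = -1 ∧ x ^ m = -1)) := by
    intro x hx
    simp only [Finset.mem_union, Finset.mem_filter]
    by_cases hc1 : (x + a) ^ m = 1 ∧ x ^ m = 1
    · exact Or.inl (Or.inl ⟨hx, hc1⟩)
    by_cases hc4 : (x + a) ^ m = -1 ∧ x ^ m = -1
    · exact Or.inl (Or.inr ⟨hx, hc4⟩)
    exact Or.inr ⟨hx, hc1, hc4⟩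
  have hc1 : (S.filter (fun x => (x + a) ^ m = 1 ∧ x ^ m = 1)).card ≤ 1 := by
    refine Finset.card_le_one.mpr ?_
    intro x hx y hy
    simp only [Finset.mem_filter, hSdef, Finset.mem_univ, true_and] at hx hy
    obtain ⟨hxe, hx1, hx2⟩ := hx
    obtain ⟨hye, hy1, hy2⟩ := hy
    rw [hsplit (x + a), hsplit x, hx1, hx2] at hxe
    rw [hsplit (y + a), hsplit y, hy1, hy2] at hye
    have key : (x - y) * (x + y + a) * 2 = 0 := by linear_combination hxe - hye
    rcases mul_eq_zero.mp key with h0 | h0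
    · rcases mul_eq_zero.mp h0 with h0 | h0
      · exact sub_eq_zero.mp h0
      · exfalso
        have hyy : y = -(x + a) := by linear_combination h0
        rw [hyy, hnegpow, hx1] at hy2
        exact h1 hy2
    · exact absurd h0 h2
  have hc4 : (S.filter (fun x => (x + a) ^ m = -1 ∧ x ^ m = -1)).card ≤ 1 := by
    refine Finset.card_le_one.mpr ?_
    intro x hx y hy
    simp only [Finset.mem_filter, hSdef, Finset.mem_univ, true_and] at hx hy
    obtain ⟨hxe, hx1, hx2⟩ := hx
    obtain ⟨hye, hy1, hy2⟩ := hy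
    rw [hsplit (x + a), hsplit x, hx1, hx2] at hxe
    rw [hsplit (y + a), hsplit y, hy1, hy2] at hye
    have key : (x - y) * (x + y + a) * 2 = 0 := by linear_combination hye - hxe
    rcases mul_eq_zero.mp key with h0 | h0
    · rcases mul_eq_zero.mp h0 with h0 | h0
      · exact sub_eq_zero.mp h0
      · exfalso
        have hyy : y = -(x + a) := by linear_combination h0
        rw [hyy, hnegpow, hx1, neg_neg] at hy2
        exact h1 hy2.symm
    · exact absurd h0 h2
  have hc3 : (S.filter (fun x => ¬((x + a) ^ m = 1 ∧ x ^ m = 1) ∧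
        ¬((x + a) ^ m = -1 ∧ x ^ m = -1))).card ≤ 1 := by
    refine Finset.card_le_one.mpr ?_
    intro x hx y hy
    have hane : a ^ m * a ^ 2 ≠ 0 := mul_ne_zero (pow_ne_zero m ha) (pow_ne_zero 2 ha)
    have hb4A : b = a ^ m * a ^ 2 → b ^ 2 = a ^ 4 := by
      intro h; rw [h]; linear_combination (a ^ 4) * hamm
    have hb4B : b = -(a ^ m * a ^ 2) → b ^ 2 = a ^ 4 := by
      intro h; rw [h]; linear_combination (a ^ 4) * hamm
    rcases hclass x hx with ⟨hx0, hbx⟩ | ⟨hx0, hbx⟩ | ⟨hxz, hxza, hx1', hx2', hbx⟩ |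
        ⟨hxz, hxza, hx1', hx2', hbx⟩ <;>
      rcases hclass y hy with ⟨hy0, hby⟩ | ⟨hy0, hby⟩ | ⟨hyz, hyza, hy1', hy2', hby⟩ |
        ⟨hyz, hyza, hy1', hy2', hby⟩
    · rw [hx0, hy0]
    · exfalso
      have h0 : (2 : F) * (a ^ m * a ^ 2) = 0 := by linear_combination hby - hbx
      exact (mul_ne_zero h2 hane) h0
    · exact absurd (habs y hyz hyza (hb4A hbx) (Or.inl hby)) not_false
    · exact absurd (habs y hyz hyza (hb4A hbx) (Or.inr hby)) not_false
    · exfalso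
      have h0 : (2 : F) * (a ^ m * a ^ 2) = 0 := by linear_combination hbx - hby
      exact (mul_ne_zero h2 hane) h0
    · rw [hx0, hy0]
    · exact absurd (habs y hyz hyza (hb4B hbx) (Or.inl hby)) not_false
    · exact absurd (habs y hyz hyza (hb4B hbx) (Or.inr hby)) not_false
    · exact absurd (habs x hxz hxza (hb4A hby) (Or.inl hbx)) not_false
    · exact absurd (habs x hxz hxza (hb4B hby) (Or.inl hbx)) not_false
    · -- C C
      have h0 : (2 * a) * (x - y) = 0 := by linear_combination hby - hbx
      rcases mul_eq_zero.mp h0 with h0 | h0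
      · exact absurd h0 (mul_ne_zero h2 ha)
      · exact sub_eq_zero.mp h0
    · -- C D
      exfalso
      have h0 : (2 * a) * (x + y + a) = 0 := by linear_combination hby - hbx
      rcases mul_eq_zero.mp h0 with h0 | h0
      · exact (mul_ne_zero h2 ha) h0
      · have hyy : y = -(x + a) := by linear_combination h0
        rw [hyy, hnegpow, hx1'] at hy2'
        exact h1 hy2'
    · exact absurd (habs x hxz hxza (hb4A hby) (Or.inr hbx)) not_false
    · exact absurd (habs x hxz hxza (hb4B hby) (Or.inr hbx)) not_false
    · -- D C
      exfalso
      have h0 : (2 * a) * (x + y + a) = 0 := by linear_combination hbx - hby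
      rcases mul_eq_zero.mp h0 with h0 | h0
      · exact (mul_ne_zero h2 ha) h0
      · have hyy : y = -(x + a) := by linear_combination h0
        rw [hyy, hnegpow, hx1', neg_neg] at hy2'
        exact h1 hy2'.symm
    · -- D D
      have h0 : (2 * a) * (x - y) = 0 := by linear_combination hbx - hby
      rcases mul_eq_zero.mp h0 with h0 | h0
      · exact absurd h0 (mul_ne_zero h2 ha)
      · exact sub_eq_zero.mp h0
  calc S.card ≤ _ := Finset.card_le_card hsub
    _ ≤ _ := Finset.card_union_le _ _
    _ ≤ (S.filter (fun x => (x + a) ^ m = 1 ∧ x ^ m = 1)).card +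
        (S.filter (fun x => (x + a) ^ m = -1 ∧ x ^ m = -1)).card +
        (S.filter (fun x => ¬((x + a) ^ m = 1 ∧ x ^ m = 1) ∧
          ¬((x + a) ^ m = -1 ∧ x ^ m = -1))).card := by
      gcongr
      exact Finset.card_union_le _ _
    _ ≤ 3 := by omega

theorem stmt12 {F : Type*} [Field F] [Fintype F] [DecidableEq F]
    (p n : ℕ) (hp : p.Prime) (hp3 : 3 < p) (hn : 0 < n)
    (hmod : p ^ n % 4 = 3) (hcard : Fintype.card F = p ^ n) :
    cUnif (fun x : F => x ^ ((p ^ n + 3) / 2)) (-1 : F) ≤ 3 := by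
  have hq : Fintype.card F % 4 = 3 := by rw [hcard]; exact hmod
  have hd : (p ^ n + 3) / 2 = Fintype.card F / 2 + 2 := by
    rw [hcard]
    set q := p ^ n with hq'
    omega
  unfold cUnif cDelta
  refine Finset.sup_le fun a _ => Finset.sup_le fun b _ => ?_
  have h := aux12 hq a b
  simp only [hd, neg_one_mul, sub_neg_eq_add]
  exact h
end

section
/- Let p > 3 be an odd prime with p^n ≡ 1 (mod 4), and d = (p^n + 3)/2. Then for c = -1, the c-differential uniformity of x^d on GF(p^n) is at most 4. -/
private lemma quad_card_le {F : Type*} [Field F] [DecidableEq F]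
    (c u v : F) (hc : c ≠ 0) (s : Finset F)
    (h : ∀ x ∈ s, c * x ^ 2 + u * x + v = 0) : s.card ≤ 2 := by
  by_contra hcard
  push_neg at hcard
  obtain ⟨x, hx, y, hy, z, hz, hxy, hxz, hyz⟩ := Finset.two_lt_card.mp hcard
  have h1 : (x - y) * (c * (x + y) + u) = 0 := by linear_combination h x hx - h y hy
  have h2 : (x - z) * (c * (x + z) + u) = 0 := by linear_combination h x hx - h z hz
  have e1 : c * (x + y) + u = 0 := by
    rcases mul_eq_zero.mp h1 with h' | h'
    · exact absurd (sub_eq_zero.mp h') hxy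
    · exact h'
  have e2 : c * (x + z) + u = 0 := by
    rcases mul_eq_zero.mp h2 with h' | h'
    · exact absurd (sub_eq_zero.mp h') hxz
    · exact h'
  have hcz : c * (y - z) = 0 := by linear_combination e1 - e2
  rcases mul_eq_zero.mp hcz with h' | h'
  · exact hc h'
  · exact hyz (sub_eq_zero.mp h')

theorem stmt13 {F : Type*} [Field F] [Fintype F] [DecidableEq F]
    (p n : ℕ) (hp : p.Prime) (hp3 : 3 < p) (hn : 0 < n)
    (hmod : p ^ n % 4 = 1) (hcard : Fintype.card F = p ^ n) :
    cUnif (fun x : F => x ^ ((p ^ n + 3) / 2)) (-1 : F) ≤ 4 := by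
  classical
  set d := (p ^ n + 3) / 2 with hd
  set e := (p ^ n - 1) / 2 with he
  have hq5 : 5 ≤ p ^ n := by
    have h1 : p ≤ p ^ n := Nat.le_self_pow hn.ne' p
    omega
  have hde : d = e + 2 := by omega
  have heven : e % 2 = 0 := by omega
  have he0 : e ≠ 0 := by omega
  have h2e : 2 * e = p ^ n - 1 := by omega
  -- characteristic facts
  have hF2 : (2 : F) ≠ 0 := by
    intro h
    have hdvd : ringChar F ∣ 2 := ringChar.dvd (by exact_mod_cast h)
    have hch2 : ringChar F = 2 := by
      rcases (Nat.dvd_prime Nat.prime_two).mp hdvd with h1 | h1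
      · exact absurd h1 CharP.ringChar_ne_one
      · exact h1
    have := FiniteField.even_card_iff_char_two.mp hch2
    rw [hcard] at this
    omega
  have hunit : ∀ x : F, x ≠ 0 → x ^ (2 * e) = 1 := by
    intro x hx
    rw [h2e, ← hcard]
    exact FiniteField.pow_card_sub_one_eq_one x hx
  have hsq1 : ∀ x : F, x ≠ 0 → (x ^ 2) ^ e = 1 := by
    intro x hx
    rw [← pow_mul]
    exact hunit x hx
  have hsign : ∀ x : F, x ≠ 0 → x ^ e = 1 ∨ x ^ e = -1 := by
    intro x hx
    have h1 : (x ^ e) ^ 2 = 1 := by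
      rw [← pow_mul, mul_comm e 2]; exact hunit x hx
    have h2 : (x ^ e - 1) * (x ^ e + 1) = 0 := by linear_combination h1
    rcases mul_eq_zero.mp h2 with h' | h'
    · exact Or.inl (by linear_combination h')
    · exact Or.inr (by linear_combination h')
  have hpd : ∀ x : F, x ^ d = x ^ e * x ^ 2 := by
    intro x; rw [hde, pow_add]
  have hneg1 : (-1 : F) ^ e = 1 := Even.neg_one_pow (Nat.even_iff.mpr heven)
  -- main bound
  apply Finset.sup_le
  intro a _
  apply Finset.sup_le
  intro b _
  -- key combinatorial lemma
  have key : ∀ s : Finset F,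
      (∀ x ∈ s, (x + a) ^ e * (x + a) ^ 2 + x ^ e * x ^ 2 = b) → s.card ≤ 4 := by
    intro s hmem
    rcases eq_or_ne a 0 with ha | ha
    · -- a = 0
      subst ha
      have h1 : (s.filter (fun x => 2 * x ^ 2 = b)).card
          + (s.filter (fun x => ¬(2 * x ^ 2 = b))).card = s.card :=
        Finset.card_filter_add_card_filter_not _
      have hc1 : (s.filter (fun x => 2 * x ^ 2 = b)).card ≤ 2 := by
        apply quad_card_le 2 0 (-b) hF2
        intro x hx
        have := (Finset.mem_filter.mp hx).2
        linear_combination this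
      have hc2 : (s.filter (fun x => ¬(2 * x ^ 2 = b))).card ≤ 2 := by
        apply quad_card_le 2 0 b hF2
        intro x hx
        obtain ⟨hxs, hne⟩ := Finset.mem_filter.mp hx
        have heq := hmem x hxs
        simp only [add_zero] at heq
        rcases eq_or_ne x 0 with hx0 | hx0
        · subst hx0
          rw [zero_pow he0] at heq
          exfalso; apply hne
          simp only [← heq]; ring
        · rcases hsign x hx0 with hu | hu
          · rw [hu] at heq
            exact absurd (by linear_combination heq) hne
          · rw [hu] at heq
            linear_combination -heq
      omega
    · -- a ≠ 0
      have h2a0 : (2 * a : F) ≠ 0 := mul_ne_zero hF2 ha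
      set T := s.filter (fun x => x = 0 ∨ x = -a) with hT
      set S1 := s.filter (fun x => ¬(x = 0 ∨ x = -a)) with hS1
      set A := S1.filter (fun x => x ^ e = 1 ∧ (x + a) ^ e = 1) with hA
      set S2 := S1.filter (fun x => ¬(x ^ e = 1 ∧ (x + a) ^ e = 1)) with hS2
      set B := S2.filter (fun x => x ^ e = -1 ∧ (x + a) ^ e = -1) with hB
      set M := S2.filter (fun x => ¬(x ^ e = -1 ∧ (x + a) ^ e = -1)) with hM
      have hsplit1 : T.card + S1.card = s.card :=
        Finset.card_filter_add_card_filter_not _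
      have hsplit2 : A.card + S2.card = S1.card :=
        Finset.card_filter_add_card_filter_not _
      have hsplit3 : B.card + M.card = S2.card :=
        Finset.card_filter_add_card_filter_not _
      -- basic membership facts
      have hS1mem : ∀ x ∈ S1, x ≠ 0 ∧ x + a ≠ 0 ∧
          (x + a) ^ e * (x + a) ^ 2 + x ^ e * x ^ 2 = b := by
        intro x hx
        obtain ⟨hxs, hnz⟩ := Finset.mem_filter.mp hx
        push_neg at hnz
        refine ⟨hnz.1, ?_, hmem x hxs⟩
        intro h
        exact hnz.2 (eq_neg_of_add_eq_zero_left h)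
      have hAprop : ∀ x ∈ A, x ≠ 0 ∧ x + a ≠ 0 ∧ x ^ e = 1 ∧ (x + a) ^ e = 1 ∧
          (x + a) ^ 2 + x ^ 2 = b := by
        intro x hx
        obtain ⟨hx1, hu, hv⟩ := Finset.mem_filter.mp hx
        obtain ⟨h0, hxa, heq⟩ := hS1mem x hx1
        rw [hu, hv, one_mul, one_mul] at heq
        exact ⟨h0, hxa, hu, hv, heq⟩
      have hBprop : ∀ x ∈ B, x ≠ 0 ∧ x + a ≠ 0 ∧ x ^ e = -1 ∧ (x + a) ^ e = -1 ∧
          (x + a) ^ 2 + x ^ 2 = -b := by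
        intro x hx
        obtain ⟨hx2, hu, hv⟩ := Finset.mem_filter.mp hx
        obtain ⟨hx1, _⟩ := Finset.mem_filter.mp hx2
        obtain ⟨h0, hxa, heq⟩ := hS1mem x hx1
        rw [hu, hv] at heq
        exact ⟨h0, hxa, hu, hv, by linear_combination -heq⟩
      have hMprop : ∀ x ∈ M, x ≠ 0 ∧ x + a ≠ 0 ∧ x ^ e * (x + a) ^ e = -1 ∧
          (2 * a * x + a ^ 2) ^ 2 = b ^ 2 := by
        intro x hx
        obtain ⟨hx2, hnB⟩ := Finset.mem_filter.mp hx
        obtain ⟨hx1, hnA⟩ := Finset.mem_filter.mp hx2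
        obtain ⟨h0, hxa, heq⟩ := hS1mem x hx1
        rcases hsign x h0 with hu | hu <;> rcases hsign (x + a) hxa with hv | hv
        · exact absurd ⟨hu, hv⟩ hnA
        · rw [hu, hv] at heq
          refine ⟨h0, hxa, by rw [hu, hv]; ring, ?_⟩
          linear_combination (b - 2 * a * x - a ^ 2) * heq
        · rw [hu, hv] at heq
          refine ⟨h0, hxa, by rw [hu, hv]; ring, ?_⟩
          linear_combination (2 * a * x + a ^ 2 + b) * heq
        · exact absurd ⟨hu, hv⟩ hnB
      -- cardinality bounds
      have hTcard : T.card ≤ 2 := by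
        have hsub : T ⊆ ({0, -a} : Finset F) := by
          intro x hx
          have := (Finset.mem_filter.mp hx).2
          simp only [Finset.mem_insert, Finset.mem_singleton]
          exact this
        calc T.card ≤ ({0, -a} : Finset F).card := Finset.card_le_card hsub
          _ ≤ 2 := by
            apply le_trans (Finset.card_insert_le _ _)
            simp
      have hAcard : A.card ≤ 2 := by
        apply quad_card_le 2 (2 * a) (a ^ 2 - b) hF2
        intro x hx
        obtain ⟨_, _, _, _, heq⟩ := hAprop x hx
        linear_combination heq
      have hBcard : B.card ≤ 2 := by
        apply quad_card_le 2 (2 * a) (a ^ 2 + b) hF2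
        intro x hx
        obtain ⟨_, _, _, _, heq⟩ := hBprop x hx
        linear_combination heq
      have hMcard : M.card ≤ 2 := by
        apply quad_card_le ((2 * a) ^ 2) (4 * a ^ 3) (a ^ 4 - b ^ 2) (pow_ne_zero 2 h2a0)
        intro x hx
        obtain ⟨_, _, _, hsq⟩ := hMprop x hx
        linear_combination hsq
      rcases T.eq_empty_or_nonempty with hTe | ⟨x0, hx0⟩
      · -- no boundary solutions
        have hT0 : T.card = 0 := by rw [hTe]; exact Finset.card_empty
        rcases M.eq_empty_or_nonempty with hMe | ⟨xm, hxm⟩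
        · have hM0 : M.card = 0 := by rw [hMe]; exact Finset.card_empty
          omega
        · obtain ⟨hm0, hma, hmχ, hmsq⟩ := hMprop xm hxm
          rcases A.eq_empty_or_nonempty with hAe | ⟨x1, hx1⟩
          · have hA0 : A.card = 0 := by rw [hAe]; exact Finset.card_empty
            omega
          · obtain ⟨h10, h1a, s1, s1', heq1⟩ := hAprop x1 hx1
            have hBe : B = ∅ := by
              apply Finset.eq_empty_of_forall_notMem
              intro x2 hx2
              obtain ⟨h20, h2a', s2, s2', heq2⟩ := hBprop x2 hx2
              have hP1 : 2 * (x1 * (x1 + a)) = b - a ^ 2 := by linear_combination heq1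
              have hP2 : 2 * (x2 * (x2 + a)) = -b - a ^ 2 := by linear_combination heq2
              have hPm : (2 * a) ^ 2 * (xm * (xm + a)) = b ^ 2 - a ^ 4 := by
                linear_combination hmsq
              have hkey : (2 : F) ^ 2 * ((x1 * (x1 + a)) * (x2 * (x2 + a)))
                  = (-1) * ((2 * a) ^ 2 * (xm * (xm + a))) := by
                linear_combination (2 * (x2 * (x2 + a))) * hP1 + (b - a ^ 2) * hP2 + hPm
              have hL : (((2 : F) ^ 2) * ((x1 * (x1 + a)) * (x2 * (x2 + a)))) ^ e = 1 := by
                rw [mul_pow, mul_pow, mul_pow, mul_pow, hsq1 2 hF2, s1, s1', s2, s2']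
                norm_num
              have hR : ((-1 : F) * ((2 * a) ^ 2 * (xm * (xm + a)))) ^ e = -1 := by
                rw [mul_pow (-1 : F), mul_pow ((2 * a) ^ 2), mul_pow xm, hneg1,
                  hsq1 (2 * a) h2a0, hmχ]
                norm_num
              have hone : (1 : F) = -1 := by
                calc (1 : F) = ((2 : F) ^ 2 * ((x1 * (x1 + a)) * (x2 * (x2 + a)))) ^ e :=
                      hL.symm
                  _ = ((-1 : F) * ((2 * a) ^ 2 * (xm * (xm + a)))) ^ e := by rw [hkey]
                  _ = -1 := hR
              exact hF2 (by linear_combination hone)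
            have hB0 : B.card = 0 := by rw [hBe]; exact Finset.card_empty
            omega
      · -- boundary solution exists
        obtain ⟨hx0s, hx0z⟩ := Finset.mem_filter.mp hx0
        have heq0 := hmem x0 hx0s
        have hb : b = a ^ 2 ∨ b = -a ^ 2 := by
          rcases hx0z with h | h
          · subst h
            rw [zero_pow he0] at heq0
            simp only [zero_add] at heq0
            rcases hsign a ha with hu | hu
            · left; rw [hu] at heq0; linear_combination -heq0
            · right; rw [hu] at heq0; linear_combination -heq0
          · subst h
            have hna : (-a : F) + a = 0 := by ring
            rw [hna, zero_pow he0] at heq0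
            rcases hsign (-a) (neg_ne_zero.mpr ha) with hu | hu
            · left; rw [hu] at heq0; linear_combination -heq0
            · right; rw [hu] at heq0; linear_combination -heq0
        have hM0 : M.card = 0 := by
          rw [Finset.card_eq_zero]
          apply Finset.eq_empty_of_forall_notMem
          intro x hx
          obtain ⟨hz0, hza, _, hsq⟩ := hMprop x hx
          have hb2 : b ^ 2 = a ^ 4 := by
            rcases hb with h | h <;> rw [h] <;> ring
          rw [hb2] at hsq
          have hzz : ((2 * a) ^ 2) * (x * (x + a)) = 0 := by linear_combination hsq
          rcases mul_eq_zero.mp hzz with h' | h'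
          · exact pow_ne_zero 2 h2a0 h'
          · rcases mul_eq_zero.mp h' with h'' | h''
            · exact hz0 h''
            · exact hza h''
        rcases hb with hb | hb
        · -- b = a^2 : A is empty
          have hA0 : A.card = 0 := by
            rw [Finset.card_eq_zero]
            apply Finset.eq_empty_of_forall_notMem
            intro x hx
            obtain ⟨hz0, hza, _, _, heq⟩ := hAprop x hx
            rw [hb] at heq
            have hzz : (2 : F) * (x * (x + a)) = 0 := by linear_combination heq
            rcases mul_eq_zero.mp hzz with h' | h'
            · exact hF2 h'
            · rcases mul_eq_zero.mp h' with h'' | h''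
              · exact hz0 h''
              · exact hza h''
          omega
        · -- b = -a^2 : B is empty
          have hB0 : B.card = 0 := by
            rw [Finset.card_eq_zero]
            apply Finset.eq_empty_of_forall_notMem
            intro x hx
            obtain ⟨hz0, hza, _, _, heq⟩ := hBprop x hx
            rw [hb] at heq
            have hzz : (2 : F) * (x * (x + a)) = 0 := by linear_combination heq
            rcases mul_eq_zero.mp hzz with h' | h'
            · exact hF2 h'
            · rcases mul_eq_zero.mp h' with h'' | h''
              · exact hz0 h''
              · exact hza h''
          omega
  -- apply key to the filter set
  simp only [cDelta]
  apply key
  intro x hx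
  have heq := (Finset.mem_filter.mp hx).2
  rw [hpd, hpd] at heq
  linear_combination heq
end

section
/- Let p be an odd prime and d = (p^n - 3)/2. Then for c = -1, the c-differential uniformity of x^d on GF(p^n) is at most 4; i.e., for all a, b ∈ GF(p^n), the equation (x+a)^d + x^d = b has at most 4 solutions. -/
private lemma aux_main {F : Type*} [Field F] [Fintype F] [DecidableEq F]
    (hq5 : 5 ≤ Fintype.card F) (hqodd : Odd (Fintype.card F)) (a b : F) :
    (Finset.univ.filter
      (fun x : F => (x + a) ^ ((Fintype.card F - 3) / 2) + x ^ ((Fintype.card F - 3) / 2) = b)).card ≤ 4 := by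
  classical
  set q := Fintype.card F with hq
  set d := (q - 3) / 2 with hdd
  set e := (q - 1) / 2 with hee
  obtain ⟨k, hk⟩ := hqodd
  have hde1 : d + 1 = e := by omega
  have hde2 : 2 * e = q - 1 := by omega
  have hd1 : 1 ≤ d := by omega
  have hcast : ((q : ℕ) : F) = 0 := FiniteField.cast_card_eq_zero F
  have h2 : (2 : F) ≠ 0 := by
    intro h20
    rw [hk] at hcast
    push_cast at hcast
    rw [h20] at hcast
    simp at hcast
  have hm1 : (-1 : F) ≠ 1 := by
    intro h
    apply h2
    linear_combination -h
  set χ : F → F := fun x => x ^ e with hχ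
  have hχone : χ (1 : F) = 1 := one_pow e
  have hpow : ∀ x : F, x ≠ 0 → x ^ d = χ x * x⁻¹ := by
    intro x hx
    have h1 : χ x = x ^ d * x := by
      simp only [hχ]
      rw [← hde1, pow_succ]
    rw [h1]
    field_simp
  have husq : ∀ x : F, x ≠ 0 → χ x * χ x = 1 := by
    intro x hx
    simp only [hχ]
    rw [← pow_add]
    have heq : e + e = q - 1 := by omega
    rw [heq]
    exact FiniteField.pow_card_sub_one_eq_one x hx
  have hsq : ∀ x : F, x ≠ 0 → χ x = 1 ∨ χ x = -1 := by
    intro x hx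
    exact mul_self_eq_one_iff.mp (husq x hx)
  have hχ0 : ∀ x : F, x ≠ 0 → χ x ≠ 0 := by
    intro x hx
    rcases hsq x hx with h | h <;> rw [h]
    · exact one_ne_zero
    · exact neg_ne_zero.mpr one_ne_zero
  have hmul : ∀ x y : F, χ (x * y) = χ x * χ y := by
    intro x y
    simp only [hχ]
    rw [mul_pow]
  have hcube : ∀ y : F, y ^ 3 = 1 → χ y = 1 := by
    intro y hy
    have hy0 : y ≠ 0 := by
      intro h
      rw [h] at hy
      simp at hy
    rcases hsq y hy0 with h | h
    · exact h
    · exfalso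
      have h3 : χ y ^ 3 = 1 := by
        simp only [hχ]
        rw [← pow_mul, mul_comm e 3, pow_mul, hy, one_pow]
      rw [h] at h3
      norm_num at h3
      exact hm1 h3
  have hzero : (0 : F) ^ d = 0 := zero_pow (by omega)
  by_cases ha : a = 0
  · -- case a = 0
    subst ha
    have hsub : (Finset.univ.filter
        (fun x : F => (x + 0) ^ d + x ^ d = b)) ⊆ {0, 2 * b⁻¹, -(2 * b⁻¹)} := by
      intro x hx
      simp only [Finset.mem_filter, add_zero] at hx
      obtain ⟨-, sol⟩ := hx
      simp only [Finset.mem_insert, Finset.mem_singleton]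
      by_cases hx0 : x = 0
      · left; exact hx0
      rw [hpow x hx0] at sol
      have hb0 : b ≠ 0 := by
        intro hb
        rw [hb] at sol
        rcases hsq x hx0 with h | h <;> rw [h] at sol <;> field_simp at sol
        · exact h2 (by linear_combination sol)
        · exact h2 (by linear_combination -sol)
      rcases hsq x hx0 with h | h <;> rw [h] at sol
      · right; left
        have hxb : b * x = 2 := by
          field_simp at sol
          linear_combination -sol
        field_simp
        linear_combination hxb
      · right; right
        have hxb : b * x = -2 := by
          field_simp at sol
          linear_combination -sol
        field_simp
        linear_combination hxb
    calc (Finset.univ.filter (fun x : F => (x + 0) ^ d + x ^ d = b)).card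
        ≤ ({0, 2 * b⁻¹, -(2 * b⁻¹)} : Finset F).card := Finset.card_le_card hsub
      _ ≤ 3 := by
          apply le_trans (Finset.card_insert_le _ _)
          apply Nat.succ_le_succ
          apply le_trans (Finset.card_insert_le _ _)
          simp
      _ ≤ 4 := by omega
  · -- case a ≠ 0
    set S := Finset.univ.filter (fun x : F => (x + a) ^ d + x ^ d = b) with hSdef
    have hmemS : ∀ x : F, x ∈ S → (x + a) ^ d + x ^ d = b := by
      intro x hx
      simpa [hSdef] using hx
    have hE : ∀ x : F, x ≠ 0 → x + a ≠ 0 → x ∈ S →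
        χ (x + a) * x + χ x * (x + a) = b * (x * (x + a)) := by
      intro x hx hxa hxS
      have sol := hmemS x hxS
      rw [hpow _ hx, hpow _ hxa] at sol
      field_simp at sol
      linear_combination sol
    set Sp := S.filter (fun x : F => x = 0 ∨ x = -a) with hSp
    set Mx := S.filter (fun x : F => ¬(x = 0 ∨ x = -a) ∧ χ x * χ (x + a) = -1) with hMx
    set Sm := S.filter (fun x : F => ¬(x = 0 ∨ x = -a) ∧ χ x = χ (x + a)) with hSm
    have hMxFacts : ∀ x : F, x ∈ Mx → x ≠ 0 ∧ x + a ≠ 0 ∧ χ x * χ (x + a) = -1 ∧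
        b * (x * (x + a)) = χ x * a ∧ b ≠ 0 ∧ χ (x + a) = -χ x := by
      intro x hx
      simp only [hMx, Finset.mem_filter] at hx
      obtain ⟨hxS, hnot, hprod⟩ := hx
      push_neg at hnot
      have hx0 : x ≠ 0 := hnot.1
      have hxa : x + a ≠ 0 := by
        intro h
        exact hnot.2 (by linear_combination h)
      have hv : χ (x + a) = -χ x := by
        have h1 : χ x * (χ x * χ (x + a)) = χ x * (-1) := by rw [hprod]
        rw [← mul_assoc, husq x hx0, one_mul] at h1
        rw [h1]; ring
      have hEx := hE x hx0 hxa hxS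
      rw [hv] at hEx
      have hA : b * (x * (x + a)) = χ x * a := by linear_combination -hEx
      have hb0 : b ≠ 0 := by
        intro hb
        rw [hb, zero_mul] at hA
        rcases mul_eq_zero.mp hA.symm with h | h
        · exact hχ0 x hx0 h
        · exact ha h
      exact ⟨hx0, hxa, hprod, hA, hb0, hv⟩
    have hSmFacts : ∀ x : F, x ∈ Sm → x ≠ 0 ∧ x + a ≠ 0 ∧ χ x = χ (x + a) ∧
        χ x * (2 * x + a) = b * (x * (x + a)) := by
      intro x hx
      simp only [hSm, Finset.mem_filter] at hx
      obtain ⟨hxS, hnot, heq⟩ := hx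
      push_neg at hnot
      have hx0 : x ≠ 0 := hnot.1
      have hxa : x + a ≠ 0 := by
        intro h
        exact hnot.2 (by linear_combination h)
      have hEx := hE x hx0 hxa hxS
      rw [← heq] at hEx
      exact ⟨hx0, hxa, heq, by linear_combination hEx⟩
    have hcover : S ⊆ Sp ∪ Mx ∪ Sm := by
      intro x hxS
      simp only [Finset.mem_union, hSp, hMx, hSm, Finset.mem_filter]
      by_cases h0 : x = 0 ∨ x = -a
      · exact Or.inl (Or.inl ⟨hxS, h0⟩)
      · push_neg at h0
        have hx0 : x ≠ 0 := h0.1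
        have hxa : x + a ≠ 0 := by
          intro h
          exact h0.2 (by linear_combination h)
        have h0' : ¬(x = 0 ∨ x = -a) := by push_neg; exact h0
        rcases hsq x hx0 with h1 | h1 <;> rcases hsq (x + a) hxa with h2' | h2'
        · exact Or.inr ⟨hxS, h0', by rw [h1, h2']⟩
        · exact Or.inl (Or.inr ⟨hxS, h0', by rw [h1, h2']; ring⟩)
        · exact Or.inl (Or.inr ⟨hxS, h0', by rw [h1, h2']; ring⟩)
        · exact Or.inr ⟨hxS, h0', by rw [h1, h2']⟩
    have hSp2 : Sp.card ≤ 2 := by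
      have hsub : Sp ⊆ {0, -a} := by
        intro x hx
        simp only [hSp, Finset.mem_filter] at hx
        simp only [Finset.mem_insert, Finset.mem_singleton]
        exact hx.2
      apply le_trans (Finset.card_le_card hsub)
      apply le_trans (Finset.card_insert_le _ _)
      simp
    have hMpair : ∀ x y : F, x ∈ Mx → y ∈ Mx → x ≠ y → χ x = χ y →
        y = -x - a ∧ χ (-1 : F) = -1 := by
      intro x y hxM hyM hne hxy
      obtain ⟨hx0, hxa, hprodx, hAx, hb0, hvx⟩ := hMxFacts x hxM
      obtain ⟨hy0, hya, hprody, hAy, -, hvy⟩ := hMxFacts y hyM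
      rw [← hxy] at hAy
      have hz : b * ((x - y) * (x + y + a)) = 0 := by linear_combination hAx - hAy
      rcases mul_eq_zero.mp hz with h | h
      · exact absurd h hb0
      rcases mul_eq_zero.mp h with h | h
      · exact absurd (sub_eq_zero.mp h) hne
      have hyeq : y = -x - a := by linear_combination h
      refine ⟨hyeq, ?_⟩
      have h1 : χ y = χ (-1 : F) * χ (x + a) := by
        rw [hyeq, show (-x - a : F) = -1 * (x + a) by ring, hmul]
      rw [hvx, ← hxy] at h1
      have h3 : (1 + χ (-1 : F)) * χ x = 0 := by linear_combination h1
      rcases mul_eq_zero.mp h3 with h | h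
      · linear_combination h
      · exact absurd h (hχ0 x hx0)
    have hMtriple : ∀ x y z : F, x ∈ Mx → y ∈ Mx → z ∈ Mx →
        x ≠ y → z ≠ x → z ≠ y → χ x = χ y → False := by
      intro x y z hxM hyM hzM hne hzx hzy hxy
      obtain ⟨hyeq, hχm1⟩ := hMpair x y hxM hyM hne hxy
      obtain ⟨hx0, hxa, hprodx, hAx, hb0, hvx⟩ := hMxFacts x hxM
      obtain ⟨hz0, hza, hprodz, hAz, -, hvz⟩ := hMxFacts z hzM
      by_cases hzxχ : χ z = χ x
      · obtain ⟨hzeq, -⟩ := hMpair x z hxM hzM (Ne.symm hzx) hzxχ.symm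
        exact hzy (hzeq.trans hyeq.symm)
      · have hzval : χ z = -χ x := by
          rcases hsq z hz0 with h | h <;> rcases hsq x hx0 with h' | h'
          · exact (hzxχ (h.trans h'.symm)).elim
          · simp [h, h']
          · simp [h, h']
          · exact (hzxχ (h.trans h'.symm)).elim
        rw [hzval] at hAz
        have hzz : z * (z + a) = -(x * (x + a)) :=
          mul_left_cancel₀ hb0 (by linear_combination hAz + hAx)
        have hc1 : χ (z * (z + a)) = -1 := by rw [hmul]; exact hprodz
        have hc2 : χ (z * (z + a)) = 1 := by
          rw [hzz, show (-(x * (x + a)) : F) = -1 * (x * (x + a)) by ring,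
            hmul, hmul, hχm1, hprodx]
          ring
        rw [hc1] at hc2
        exact hm1 hc2
    have hMx2 : Mx.card ≤ 2 := by
      by_contra hcon
      push_neg at hcon
      obtain ⟨x, hxM, y, hyM, z, hzM, hxy, hxz, hyz⟩ := Finset.two_lt_card.mp hcon
      have hx0 := (hMxFacts x hxM).1
      have hy0 := (hMxFacts y hyM).1
      have hz0 := (hMxFacts z hzM).1
      have htri : χ x = χ y ∨ χ x = χ z ∨ χ y = χ z := by
        rcases hsq x hx0 with h1 | h1 <;> rcases hsq y hy0 with h2' | h2' <;>
          rcases hsq z hz0 with h3 | h3 <;> simp [h1, h2', h3]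
      rcases htri with h | h | h
      · exact hMtriple x y z hxM hyM hzM hxy (Ne.symm hxz) (Ne.symm hyz) h
      · exact hMtriple x z y hxM hzM hyM hxz (Ne.symm hxy) hyz h
      · exact hMtriple y z x hyM hzM hxM hyz hxy hxz h
    have hQ : ∀ u s t : F, u * (2 * s + a) = b * (s * (s + a)) →
        u * (2 * t + a) = b * (t * (t + a)) → s ≠ t → b * (s + t + a) = 2 * u := by
      intro u s t h1 h2' hne
      have hz : (s - t) * (b * (s + t + a) - 2 * u) = 0 := by linear_combination h2' - h1
      rcases mul_eq_zero.mp hz with h | h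
      · exact absurd (sub_eq_zero.mp h) hne
      · linear_combination h
    have hSpair : ∀ x y : F, x ∈ Sm → y ∈ Sm → x ≠ y → χ x = χ y →
        b ≠ 0 ∧ b * (x + y + a) = 2 * χ x ∧ χ (-1 : F) = 1 := by
      intro x y hxS hyS hne hxy
      obtain ⟨hx0, hxa, heqx, hCx⟩ := hSmFacts x hxS
      obtain ⟨hy0, hya, heqy, hCy⟩ := hSmFacts y hyS
      rw [← hxy] at hCy
      have hsum := hQ (χ x) x y hCx hCy hne
      have hb0 : b ≠ 0 := by
        intro hb
        rw [hb, zero_mul] at hsum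
        rcases mul_eq_zero.mp hsum.symm with h | h
        · exact h2 h
        · exact hχ0 x hx0 h
      have hprod : b * (x * y) = -(χ x * a) := by linear_combination x * hsum + hCx
      have hprod2 : b * ((x + a) * (y + a)) = χ x * a := by
        linear_combination hprod + a * hsum
      have hc1 := congrArg χ hprod
      have hc2 := congrArg χ hprod2
      rw [hmul, hmul, show (-(χ x * a) : F) = -1 * (χ x * a) by ring, hmul, hmul,
        ← hxy, husq x hx0] at hc1
      rw [hmul, hmul, ← heqx, ← heqy, ← hxy, husq x hx0, hmul] at hc2
      have hkey : χ (-1 : F) * (χ (χ x) * χ a) = χ (χ x) * χ a := by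
        rw [← hc1, ← hc2]
      have hne1 : χ (χ x) * χ a ≠ 0 := by
        apply mul_ne_zero
        · apply hχ0
          rcases hsq x hx0 with h | h <;> rw [h]
          · exact one_ne_zero
          · exact neg_ne_zero.mpr one_ne_zero
        · exact hχ0 a ha
      have hz : (χ (-1 : F) - 1) * (χ (χ x) * χ a) = 0 := by linear_combination hkey
      rcases mul_eq_zero.mp hz with h | h
      · exact ⟨hb0, hsum, by linear_combination h⟩
      · exact absurd h hne1
    have hStriple : ∀ x y z : F, x ∈ Sm → y ∈ Sm → z ∈ Sm →
        x ≠ y → z ≠ x → z ≠ y → χ x = χ y → False := by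
      intro x y z hxS hyS hzS hne hzx hzy hxy
      obtain ⟨hb0, hsum, hχm1⟩ := hSpair x y hxS hyS hne hxy
      obtain ⟨hx0, hxa, heqx, hCx⟩ := hSmFacts x hxS
      obtain ⟨hy0, hya, heqy, hCy⟩ := hSmFacts y hyS
      obtain ⟨hz0, hza, heqz, hCz⟩ := hSmFacts z hzS
      by_cases hzxχ : χ z = χ x
      · rw [hzxχ] at hCz
        have hsum2 := hQ (χ x) x z hCx hCz (Ne.symm hzx)
        have hyz : b * (y - z) = 0 := by linear_combination hsum - hsum2
        rcases mul_eq_zero.mp hyz with h | h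
        · exact hb0 h
        · exact hzy (by linear_combination -h)
      · have hzval : χ z = -χ x := by
          rcases hsq z hz0 with h | h <;> rcases hsq x hx0 with h' | h'
          · exact (hzxχ (h.trans h'.symm)).elim
          · simp [h, h']
          · simp [h, h']
          · exact (hzxχ (h.trans h'.symm)).elim
        have hχt : χ (-z - a) = -χ x := by
          rw [show (-z - a : F) = -1 * (z + a) by ring, hmul, ← heqz, hzval, hχm1]
          ring
        have hCt : χ x * (2 * (-z - a) + a) = b * ((-z - a) * ((-z - a) + a)) := by
          rw [hzval] at hCz
          linear_combination hCz
        have htxy : (-z - a) = x ∨ (-z - a) = y := by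
          by_cases htx : (-z - a) = x
          · exact Or.inl htx
          · have hsum2 := hQ (χ x) (-z - a) x hCt hCx htx
            have hzz : b * ((-z - a) - y) = 0 := by linear_combination hsum2 - hsum
            rcases mul_eq_zero.mp hzz with h | h
            · exact absurd h hb0
            · exact Or.inr (sub_eq_zero.mp h)
        have hcontr : χ x = -χ x := by
          rcases htxy with h | h
          · rw [h] at hχt; exact hχt
          · rw [h] at hχt; exact hxy.trans hχt
        have h2x : (2 : F) * χ x = 0 := by linear_combination hcontr
        rcases mul_eq_zero.mp h2x with h | h
        · exact h2 h
        · exact hχ0 x hx0 h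
    have hSm2 : Sm.card ≤ 2 := by
      by_contra hcon
      push_neg at hcon
      obtain ⟨x, hxM, y, hyM, z, hzM, hxy, hxz, hyz⟩ := Finset.two_lt_card.mp hcon
      have hx0 := (hSmFacts x hxM).1
      have hy0 := (hSmFacts y hyM).1
      have hz0 := (hSmFacts z hzM).1
      have htri : χ x = χ y ∨ χ x = χ z ∨ χ y = χ z := by
        rcases hsq x hx0 with h1 | h1 <;> rcases hsq y hy0 with h2' | h2' <;>
          rcases hsq z hz0 with h3 | h3 <;> simp [h1, h2', h3]
      rcases htri with h | h | h
      · exact hStriple x y z hxM hyM hzM hxy (Ne.symm hxz) (Ne.symm hyz) h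
      · exact hStriple x z y hxM hzM hyM hxz (Ne.symm hxy) hyz h
      · exact hStriple y z x hyM hzM hxM hyz hxy hxz h
    -- mixed excludes special
    have hexcl : ∀ s ∈ Sp, ∀ x ∈ Mx, False := by
      intro s hs x hxM
      obtain ⟨hx0, hxa, hprodx, hAx, hb0, hvx⟩ := hMxFacts x hxM
      simp only [hSp, Finset.mem_filter] at hs
      obtain ⟨hsS, hcase⟩ := hs
      have hδ : a * b = χ a ∨ a * b = -(χ (-1 : F) * χ a) := by
        rcases hcase with h | h
        · left
          have sol := hmemS s hsS
          rw [h, zero_add, hzero, add_zero, hpow a ha] at sol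
          have h4 : χ a = b * a := by rw [← sol]; field_simp
          linear_combination -h4
        · right
          have sol := hmemS s hsS
          rw [h, show (-a + a : F) = 0 by ring, hzero, zero_add,
            hpow (-a) (neg_ne_zero.mpr ha),
            show (-a : F) = -1 * a by ring, hmul] at sol
          have h4 : χ (-1 : F) * χ a = b * (-1 * a) := by rw [← sol]; field_simp
          linear_combination h4
      have hδ2 : (a * b) * (a * b) = 1 := by
        have hA1 := husq (-1 : F) (neg_ne_zero.mpr one_ne_zero)
        have hA2 := husq a ha
        rcases hδ with h | h <;> rw [h]
        · exact hA2
        · linear_combination (χ a * χ a) * hA1 + hA2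
      have h1 : (a * b) * (x * (x + a)) = χ x * (a * a) := by linear_combination a * hAx
      have hxx : x * (x + a) = (a * b) * χ x * (a * a) := by
        linear_combination (a * b) * h1 - (x * (x + a)) * hδ2
      have hc := congrArg χ hxx
      rw [hmul, hprodx] at hc
      have hrhs : χ (a * b * χ x * (a * a)) = χ (a * b) * χ (χ x) * (χ a * χ a) := by
        rw [show (a * b * χ x * (a * a) : F) = (a * b) * (χ x * (a * a)) by ring,
          hmul, hmul, hmul]
        ring
      rw [hrhs, husq a ha, mul_one] at hc
      -- hc : -1 = χ (a*b) * χ (χ x)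
      have hδ1 := mul_self_eq_one_iff.mp hδ2
      have hu := hsq x hx0
      have hneg : χ (-1 : F) = -1 ∧ (a * b) = -χ x := by
        rcases hδ1 with h | h <;> rcases hu with h' | h' <;> rw [h, h'] at hc ⊢
        · rw [hχone] at hc
          norm_num at hc
          exact absurd hc hm1
        · rw [hχone] at hc
          exact ⟨by linear_combination -hc, by norm_num⟩
        · rw [hχone] at hc
          exact ⟨by linear_combination -hc, by norm_num⟩
        · rw [husq (-1 : F) (neg_ne_zero.mpr one_ne_zero)] at hc
          exact absurd hc hm1
      obtain ⟨hneg1, hδu⟩ := hneg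
      have hδε : a * b = χ a := by
        rcases hδ with h | h
        · exact h
        · rw [h, hneg1]; ring
      have hxval : χ x = -χ a := by
        rw [← hδε]; rw [hδu]; ring
      have hq1 : x * (x + a) = -(a * a) := by
        rw [hxx, hδε, hxval]
        have hA2 := husq a ha
        linear_combination (-(a * a)) * hA2
      have hx3 : x ^ 3 = a ^ 3 := by linear_combination (x - a) * hq1
      have hy3 : (x * a⁻¹) ^ 3 = 1 := by
        rw [mul_pow, hx3, inv_pow]
        field_simp
      have hχxa := hcube _ hy3
      have hfin : χ x = χ a := by
        have hxe : x = x * a⁻¹ * a := by field_simp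
        rw [hxe, hmul, hχxa, one_mul]
      rw [hfin] at hxval
      have h2a : (2 : F) * χ a = 0 := by linear_combination hxval
      rcases mul_eq_zero.mp h2a with h | h
      · exact h2 h
      · exact hχ0 a ha h
    -- assemble
    have hcard : S.card ≤ Sp.card + Mx.card + Sm.card := by
      calc S.card ≤ (Sp ∪ Mx ∪ Sm).card := Finset.card_le_card hcover
        _ ≤ (Sp ∪ Mx).card + Sm.card := Finset.card_union_le _ _
        _ ≤ Sp.card + Mx.card + Sm.card := by
            have := Finset.card_union_le Sp Mx
            omega
    rcases Finset.eq_empty_or_nonempty Mx with hMe | hMne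
    · have hM0 : Mx.card = 0 := by rw [hMe]; rfl
      omega
    · obtain ⟨w, hw⟩ := hMne
      have hSpe : Sp = ∅ :=
        Finset.eq_empty_of_forall_notMem (fun s hs => hexcl s hs w hw)
      have hSp0 : Sp.card = 0 := by rw [hSpe]; rfl
      omega

theorem stmt14 {F : Type*} [Field F] [Fintype F] [DecidableEq F]
    (p n : ℕ) (hp : p.Prime) (hodd : Odd p) (hn : 0 < n)
    (hq : 3 < p ^ n) (hcard : Fintype.card F = p ^ n) :
    (cUnif (fun x : F => x ^ ((p ^ n - 3) / 2)) (-1 : F) ≤ 4) ∧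
    ∀ a b : F,
      (Finset.univ.filter
        (fun x : F => (x + a) ^ ((p ^ n - 3) / 2) + x ^ ((p ^ n - 3) / 2) = b)).card ≤ 4 := by
  have hqodd : Odd (Fintype.card F) := by rw [hcard]; exact hodd.pow
  have hq5 : 5 ≤ Fintype.card F := by
    obtain ⟨k, hk⟩ := hqodd
    rw [hcard] at hk ⊢
    omega
  have key : ∀ a b : F,
      (Finset.univ.filter
        (fun x : F => (x + a) ^ ((p ^ n - 3) / 2) + x ^ ((p ^ n - 3) / 2) = b)).card ≤ 4 := by
    intro a b
    have := aux_main hq5 hqodd a b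
    rwa [hcard] at this
  refine ⟨?_, key⟩
  apply Finset.sup_le
  intro a _
  apply Finset.sup_le
  intro b _
  unfold cDelta
  have heq : ∀ x : F, ((x + a) ^ ((p ^ n - 3) / 2) - (-1) * x ^ ((p ^ n - 3) / 2) = b)
      = ((x + a) ^ ((p ^ n - 3) / 2) + x ^ ((p ^ n - 3) / 2) = b) := by
    intro x
    rw [neg_one_mul, sub_neg_eq_add]
  simp only [heq]
  exact key a b
end

section
/- Let q be an odd prime power with q ≡ 1 (mod 4) and let d = (q+3)/2 with q > 3. For b ∈ GF(q), the equation (x+1)^d + x^d = b cannot have a solution in S_{1,1} and a solution in S_{1,-1} simultaneously, where S_{i,j} = {x ∈ GF(q)\{0,-1} : χ(x+1) = i, χ(x) = j}. -/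
theorem stmt15 {F : Type*} [Field F] [Fintype F] [DecidableEq F]
    (q : ℕ) (hq : Fintype.card F = q) (hq4 : q % 4 = 1) (hq3 : 3 < q)
    (hodd : Odd q) (b : F) :
    ¬ ((∃ x : F, x ≠ 0 ∧ x ≠ -1 ∧ IsSquare (x + 1) ∧ IsSquare x ∧
          (x + 1) ^ ((q + 3) / 2) + x ^ ((q + 3) / 2) = b) ∧
       (∃ y : F, y ≠ 0 ∧ y ≠ -1 ∧ IsSquare (y + 1) ∧ ¬ IsSquare y ∧
          (y + 1) ^ ((q + 3) / 2) + y ^ ((q + 3) / 2) = b)) := by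
  rintro ⟨⟨x, hx0, hx1, hxs1, hxs, hxb⟩, ⟨y, hy0, hy1, hys1, hys, hyb⟩⟩
  have hchar : ringChar F ≠ 2 := by
    intro h
    have := FiniteField.even_card_of_char_two (F := F) h
    rw [hq] at this
    omega
  have h2 : (2 : F) ≠ 0 := by
    intro h
    exact hchar (ringChar.eq_iff.mpr (CharP.charP_iff_prime_eq_zero Nat.prime_two |>.mpr h) ▸ rfl)
  have hqcard : q = Fintype.card F := hq.symm
  have hsplit : (q + 3) / 2 = q / 2 + 2 := by omega
  have pow_sq : ∀ a : F, a ≠ 0 → IsSquare a → a ^ ((q + 3) / 2) = a ^ 2 := by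
    intro a ha hs
    have := (FiniteField.isSquare_iff hchar ha).mp hs
    rw [hq] at this
    rw [hsplit, pow_add, this, one_mul]
  have pow_nsq : ∀ a : F, a ≠ 0 → ¬ IsSquare a → a ^ ((q + 3) / 2) = -(a ^ 2) := by
    intro a ha hs
    have hd := FiniteField.pow_dichotomy hchar ha
    rw [hq] at hd
    rcases hd with h | h
    · exact absurd ((FiniteField.isSquare_iff hchar ha).mpr (by rw [hq]; exact h)) hs
    · rw [hsplit, pow_add, h, neg_one_mul]
  have hx1' : x + 1 ≠ 0 := fun h => hx1 (by linear_combination h)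
  have hy1' : y + 1 ≠ 0 := fun h => hy1 (by linear_combination h)
  rw [pow_sq _ hx1' hxs1, pow_sq _ hx0 hxs] at hxb
  rw [pow_sq _ hy1' hys1, pow_nsq _ hy0 hys] at hyb
  -- (x+1)^2 + x^2 = b and (y+1)^2 - y^2 = b, i.e. 2y + 1 = b
  have key : y = x * (x + 1) := by
    have : (2:F) * y = 2 * (x * (x + 1)) := by linear_combination hyb - hxb
    exact mul_left_cancel₀ h2 this
  exact hys (key ▸ hxs.mul hxs1)
end

section
/- Let p be an odd prime and n a positive integer. Every x ∈ GF(p^n) with x ≠ 0 and x ≠ -1 can be written as x = (θ - θ^{-1})²/4 for some θ ∈ GF(p^{2n})*, with x + 1 = (θ + θ^{-1})²/4; moreover such θ can be chosen so that θ^(p^n - 1) = ±1 or θ^(p^n + 1) = ±1. -/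
theorem stmt17 {E : Type*} [Field E] [Fintype E]
    (p n : ℕ) (hp : p.Prime) (hodd : Odd p) (hn : 0 < n)
    (hcard : Fintype.card E = p ^ (2 * n)) :
    ∀ x : E, x ^ (p ^ n) = x → x ≠ 0 → x ≠ -1 →
      ∃ θ : E, θ ≠ 0 ∧
        x = (θ - θ⁻¹) ^ 2 / 4 ∧
        x + 1 = (θ + θ⁻¹) ^ 2 / 4 ∧
        (θ ^ (p ^ n - 1) = 1 ∨ θ ^ (p ^ n - 1) = -1 ∨
         θ ^ (p ^ n + 1) = 1 ∨ θ ^ (p ^ n + 1) = -1) := by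
  intro x hx hx0 hxm1
  haveI : Fact p.Prime := ⟨hp⟩
  -- characteristic of E is p
  have hpne2 : p ≠ 2 := by
    rintro rfl; exact absurd hodd (by decide)
  have hcharP : CharP E p := by
    have h1 : CharP E (ringChar E) := ringChar.charP E
    have hqprime : (ringChar E).Prime := CharP.char_is_prime E (ringChar E)
    have hdvd : p ∣ Fintype.card E := by
      rw [hcard]; exact dvd_pow_self p (by omega)
    have : p ∣ ringChar E := (prime_dvd_char_iff_dvd_card p).mpr hdvd
    have : p = ringChar E := ((Nat.prime_dvd_prime_iff_eq hp hqprime).mp this)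
    exact this ▸ h1
  haveI := hcharP
  have hring2 : ringChar E ≠ 2 := by
    rw [ringChar.eq E p]; exact hpne2
  set q := p ^ n with hq
  have hq1 : 1 ≤ q := Nat.one_le_pow _ _ hp.pos
  have hqodd : Odd q := hodd.pow
  obtain ⟨k, hk⟩ := hqodd
  have hcard2 : Fintype.card E = q ^ 2 := by
    rw [hcard, hq, ← pow_mul, Nat.mul_comm]
  have hhalf : Fintype.card E / 2 = (q - 1) * ((q + 1) / 2) := by
    have h1 : q - 1 = 2 * k := by omega
    have h2 : (q + 1) / 2 = k + 1 := by omega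
    rw [hcard2, h1, h2, hk, show (2 * k + 1) ^ 2 = 2 * (2 * k * (k + 1)) + 1 from by ring]
    generalize 2 * k * (k + 1) = m
    omega
  -- every element fixed by x ↦ x^q has a square root in E
  have sqrt : ∀ a : E, a ^ q = a → a ≠ 0 → ∃ b : E, b ^ 2 = a := by
    intro a haq ha0
    have haq1 : a ^ (q - 1) = 1 := by
      have h1 : a ^ (q - 1) * a = a ^ q := by
        rw [← pow_succ]; congr 1; omega
      rw [haq] at h1
      field_simp at h1
      exact h1
    have : IsSquare a := by
      rw [FiniteField.isSquare_iff hring2 ha0, hhalf, pow_mul, haq1, one_pow]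
    obtain ⟨b, hb⟩ := this
    exact ⟨b, by rw [sq, hb]⟩
  have hx1q : (x + 1) ^ q = x + 1 := by
    rw [add_pow_char_pow, hx, one_pow]
  have hx1ne : x + 1 ≠ 0 := fun h => hxm1 (by linear_combination h)
  obtain ⟨α, hα⟩ := sqrt (x + 1) hx1q hx1ne
  obtain ⟨β, hβ⟩ := sqrt x hx hx0
  set θ := α - β with hθ
  have hθ0 : θ ≠ 0 := by
    intro h
    have : α = β := by rwa [hθ, sub_eq_zero] at h
    rw [this, hβ] at hα
    simp at hα
  have hinv : θ⁻¹ = α + β := by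
    have : θ * (α + β) = 1 := by
      rw [hθ]; linear_combination hα - hβ
    exact inv_eq_of_mul_eq_one_right this
  have h2ne : (2 : E) ≠ 0 := by
    intro h
    have h2 : ((2 : ℕ) : E) = 0 := by exact_mod_cast h
    have hdvd := (CharP.cast_eq_zero_iff E p 2).mp h2
    have := Nat.le_of_dvd (by norm_num) hdvd
    have := hp.two_le
    interval_cases p
    · exact hpne2 rfl
  have h4ne : (4 : E) ≠ 0 := by
    have : (4 : E) = 2 * 2 := by norm_num
    rw [this]; exact mul_ne_zero h2ne h2ne
  have hsub : θ - θ⁻¹ = -(2 * β) := by rw [hinv, hθ]; ring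
  have hadd : θ + θ⁻¹ = 2 * α := by rw [hinv, hθ]; ring
  refine ⟨θ, hθ0, ?_, ?_, ?_⟩
  · rw [hsub]; field_simp; linear_combination (-4 : E) * hβ
  · rw [hadd]; field_simp; linear_combination (-4 : E) * hα
  · -- Frobenius analysis
    have hαq : α ^ q = α ∨ α ^ q = -α := by
      have h : (α ^ q) ^ 2 = α ^ 2 := by
        rw [← pow_mul, mul_comm q 2, pow_mul, hα, hx1q]
      exact sq_eq_sq_iff_eq_or_eq_neg.mp h
    have hβq : β ^ q = β ∨ β ^ q = -β := by
      have h : (β ^ q) ^ 2 = β ^ 2 := by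
        rw [← pow_mul, mul_comm q 2, pow_mul, hβ, hx]
      exact sq_eq_sq_iff_eq_or_eq_neg.mp h
    have hθq : θ ^ q = α ^ q - β ^ q := by rw [hθ, sub_pow_char_pow]
    have hpow : θ ^ (q - 1) * θ = θ ^ q := by rw [← pow_succ]; congr 1; omega
    have hpow2 : θ ^ (q + 1) = θ ^ q * θ := by rw [← pow_succ]
    rcases hαq with h1 | h1 <;> rcases hβq with h2 | h2
    · left
      have : θ ^ q = θ := by rw [hθq, h1, h2]
      rw [this] at hpow
      exact mul_right_cancel₀ hθ0 (by rw [hpow, one_mul])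
    · right; right; left
      have : θ ^ q = θ⁻¹ := by rw [hθq, h1, h2, hinv]; ring
      rw [hpow2, this, inv_mul_cancel₀ hθ0]
    · right; right; right
      have : θ ^ q = -θ⁻¹ := by rw [hθq, h1, h2, hinv]; ring
      rw [hpow2, this, neg_mul, inv_mul_cancel₀ hθ0]
    · right; left
      have : θ ^ q = -θ := by rw [hθq, h1, h2]; ring
      rw [this] at hpow
      exact mul_right_cancel₀ hθ0 (by rw [hpow, neg_one_mul])
end
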